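/- arXiv:2201.12316 — 8 statements merged into one kernel-verified Lean document; each statement's English description precedes it below -/
import Mathlib

section
/- Let k ≥ 2, let α be a bijection of ℤ with α(n+k) = α(n)+k, and let σ^k_m be the permutation exchanging n and n+1 for all n ≡ m (mod k) and fixing all other integers. Then inv_k(α ∘ σ^k_m) = inv_k(α) + 1 if α(m) < α(m+1), and inv_k(α ∘ σ^k_m) = inv_k(α) − 1 if α(m) > α(m+1). -/
/-- The set of inversions of a function `α : ℤ → ℤ`. -/
def invSet (α : ℤ → ℤ) : Set (ℤ × ℤ) := {p : ℤ × ℤ | p.1 < p.2 ∧ α p.2 < α p.1}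

/-- `inv_k`: for `k = 0` the number of all inversions, for `k ≥ 2` the number of
inversions `(u,v)` with `0 ≤ v < k`. -/
noncomputable def invk (k : ℤ) (α : ℤ → ℤ) : ℕ :=
  if k = 0 then (invSet α).ncard else ({p ∈ invSet α | 0 ≤ p.2 ∧ p.2 < k}).ncard

/-- The simple reflection `σ^k_m`, exchanging `n` and `n+1` for all `n ≡ m (mod k)`
(equality when `k = 0`), fixing all other integers. -/
def sigmak (k m : ℤ) : ℤ → ℤ := fun n =>
  if n % k = m % k then n + 1 else if n % k = (m + 1) % k then n - 1 else n

section aux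
variable {k m : ℤ}

lemma emod_add_aux (k a b : ℤ) : (a % k + b) % k = (a + b) % k := by
  conv_rhs => rw [← Int.emod_add_mul_ediv a k]
  rw [show a % k + k * (a / k) + b = a % k + b + k * (a / k) by ring,
    Int.add_mul_emod_self_left]

lemma hne_aux (hk : 2 ≤ k) : (m + 1) % k ≠ m % k := by
  intro h
  have hd : k ∣ (m + 1) - m := Int.ModEq.dvd h.symm
  have h1 : (m + 1) - m = 1 := by ring
  rw [h1] at hd
  have := Int.le_of_dvd one_pos hd
  omega

lemma dvd_small_aux (k a : ℤ) (hk : 0 < k) (h : k ∣ a) (h1 : -k < a) (h2 : a < k) : a = 0 := by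
  rcases h with ⟨t, rfl⟩
  rcases lt_trichotomy t 0 with h | h | h
  · nlinarith
  · simp [h]
  · nlinarith

lemma sigma_period (k m : ℤ) (n t : ℤ) : sigmak k m (n + k * t) = sigmak k m n + k * t := by
  unfold sigmak
  rw [Int.add_mul_emod_self_left]
  split_ifs <;> ring

lemma sigma_val1 {n : ℤ} (h : n % k = m % k) : sigmak k m n = n + 1 := by
  unfold sigmak; rw [if_pos h]

lemma sigma_val2 (hk : 2 ≤ k) {n : ℤ} (h : n % k = (m + 1) % k) :
    sigmak k m n = n - 1 := by
  unfold sigmak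
  rw [if_neg (by rw [h]; exact hne_aux hk), if_pos h]

lemma sigma_val3 {n : ℤ} (h1 : n % k ≠ m % k) (h2 : n % k ≠ (m + 1) % k) :
    sigmak k m n = n := by
  unfold sigmak; rw [if_neg h1, if_neg h2]

lemma sigma_invol (hk : 2 ≤ k) (n : ℤ) : sigmak k m (sigmak k m n) = n := by
  by_cases h1 : n % k = m % k
  · have h2 : (n + 1) % k = (m + 1) % k := by
      rw [← emod_add_aux k n 1, h1, emod_add_aux]
    rw [sigma_val1 h1, sigma_val2 hk h2]; ring
  · by_cases h2 : n % k = (m + 1) % k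
    · have h3 : (n - 1) % k = m % k := by
        rw [show n - 1 = n + (-1) by ring, ← emod_add_aux k n (-1), h2, emod_add_aux,
          show m + 1 + (-1) = m by ring]
      rw [sigma_val2 hk h2, sigma_val1 h3]; ring
    · rw [sigma_val3 h1 h2, sigma_val3 h1 h2]

lemma sigma_inj (hk : 2 ≤ k) {a b : ℤ} (h : sigmak k m a = sigmak k m b) : a = b := by
  have := sigma_invol (m := m) hk a
  rw [h, sigma_invol hk] at this
  exact this.symm

lemma sigma_cross (hk : 2 ≤ k) {a b : ℤ} (hab : a < b)
    (h : sigmak k m b < sigmak k m a) : b = a + 1 ∧ a % k = m % k := by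
  unfold sigmak at h
  split_ifs at h <;> omega

lemma sigma_m (hk : 2 ≤ k) : sigmak k m m = m + 1 := by
  unfold sigmak; rw [if_pos rfl]

lemma sigma_m1 (hk : 2 ≤ k) : sigmak k m (m + 1) = m := by
  unfold sigmak; rw [if_neg (hne_aux hk), if_pos rfl]; ring

end aux

section aux2
variable {k : ℤ}

lemma hft_aux {f : ℤ → ℤ} (hf : ∀ n, f (n + k) = f n + k) (n t : ℤ) :
    f (n + k * t) = f n + k * t := by
  induction t using Int.induction_on with
  | zero => simp
  | succ t ih =>
      have : n + k * (t + 1) = (n + k * t) + k := by ring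
      rw [this, hf, ih]; ring
  | pred t ih =>
      have h1 := hf (n + k * (-t - 1))
      have h2 : n + k * (-t - 1) + k = n + k * (-t) := by ring
      rw [h2, ih] at h1
      omega

lemma fin_aux (hk : 2 ≤ k) (f : ℤ → ℤ) (hf : ∀ n, f (n + k) = f n + k) :
    ({p ∈ invSet f | 0 ≤ p.2 ∧ p.2 < k} : Set (ℤ × ℤ)).Finite := by
  have hk0 : (0 : ℤ) < k := by omega
  set S : Finset ℤ := Finset.Ico (0 : ℤ) k with hS
  have hSne : S.Nonempty := ⟨0, by simp [hS]; omega⟩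
  set M : ℤ := S.sup' hSne f with hM
  set c : ℤ := S.inf' hSne f with hc
  apply Set.Finite.subset ((Set.finite_Icc (c - M) k).prod (Set.finite_Icc 0 k))
  rintro ⟨u, v⟩ ⟨⟨huv, hinv⟩, hv0, hvk⟩
  have hvS : v ∈ S := by simp [hS]; omega
  have huS : u % k ∈ S := by
    simp [hS]
    exact ⟨Int.emod_nonneg u (by omega), Int.emod_lt_of_pos u hk0⟩
  have hinv' : f v < f u := hinv
  have h1 : f v ≥ c := Finset.inf'_le f hvS
  have h2 : f (u % k) ≤ M := Finset.le_sup' f huS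
  have h3 : f u = f (u % k) + k * (u / k) := by
    conv_lhs => rw [← Int.emod_add_mul_ediv u k]
    exact hft_aux hf _ _
  have h4 : k * (u / k) > c - M := by omega
  have h5 : u % k + k * (u / k) = u := Int.emod_add_mul_ediv u k
  have h6 : 0 ≤ u % k := Int.emod_nonneg u (by omega)
  constructor
  · simp only [Set.mem_Icc]
    omega
  · simp only [Set.mem_Icc]
    omega

end aux2

lemma core_aux (k m : ℤ) (hk : 2 ≤ k) (f : ℤ → ℤ) (hf : ∀ n, f (n + k) = f n + k)
    (hm : f (m + 1) < f m) :
    invk k (f ∘ sigmak k m) + 1 = invk k f := by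
  have hk0 : (0 : ℤ) < k := by omega
  have hkne : k ≠ 0 := by omega
  set σ := sigmak k m with hσ
  set g := f ∘ σ with hg
  have hσp : ∀ n t : ℤ, σ (n + k * t) = σ n + k * t := sigma_period k m
  have hval1 : ∀ n : ℤ, n % k = m % k → σ n = n + 1 := fun n h => sigma_val1 h
  have hval2 : ∀ n : ℤ, n % k = (m + 1) % k → σ n = n - 1 := fun n h => sigma_val2 hk h
  have hval3 : ∀ n : ℤ, n % k ≠ m % k → n % k ≠ (m + 1) % k → σ n = n :=
    fun n h1 h2 => sigma_val3 h1 h2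
  have hinvol : ∀ n : ℤ, σ (σ n) = n := sigma_invol hk
  have hinjσ : ∀ a b : ℤ, σ a = σ b → a = b := fun a b h => sigma_inj hk h
  have hcross : ∀ a b : ℤ, a < b → σ b < σ a → b = a + 1 ∧ a % k = m % k :=
    fun a b h1 h2 => sigma_cross hk h1 h2
  have hgf : ∀ n, g (n + k) = g n + k := by
    intro n
    have h1 : σ (n + k) = σ n + k := by simpa using hσp n 1
    simp [hg, Function.comp, h1, hf]
  simp only [invk, if_neg hkne]
  set A := {p ∈ invSet f | 0 ≤ p.2 ∧ p.2 < k} with hA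
  set B := {p ∈ invSet g | 0 ≤ p.2 ∧ p.2 < k} with hB
  have hmemA : ∀ u v : ℤ, (u, v) ∈ A ↔ u < v ∧ f v < f u ∧ 0 ≤ v ∧ v < k := by
    intro u v; rw [hA]; simp [invSet, and_assoc]
  have hmemB : ∀ u v : ℤ, (u, v) ∈ B ↔ u < v ∧ f (σ v) < f (σ u) ∧ 0 ≤ v ∧ v < k := by
    intro u v; rw [hB]; simp [invSet, hg, Function.comp, and_assoc]
  -- monotonicity on the class of m
  have hmono : ∀ n : ℤ, n % k = m % k → f (n + 1) < f n := by
    intro n h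
    obtain ⟨t, ht⟩ : k ∣ m - n := Int.ModEq.dvd h
    have e1 := hft_aux hf m (-t)
    have e2 := hft_aux hf (m + 1) (-t)
    have hkt : k * (-t) = -(k * t) := by ring
    have e3 : m + k * (-t) = n := by omega
    have e4 : m + 1 + k * (-t) = n + 1 := by omega
    rw [e3] at e1
    rw [e4] at e2
    omega
  -- the special pair
  set t0 : ℤ := -((m + 1) / k) with ht0
  have hp2 : (m + 1) % k = m + 1 + k * t0 := by rw [Int.emod_def]; ring
  set p0 : ℤ × ℤ := ((m + 1) % k - 1, (m + 1) % k) with hp0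
  have hp0A : p0 ∈ A := by
    rw [hp0, hmemA]
    refine ⟨by omega, ?_, Int.emod_nonneg _ hkne, Int.emod_lt_of_pos _ hk0⟩
    have e1 := hft_aux hf (m + 1) t0
    have e2 := hft_aux hf m t0
    rw [← hp2] at e1
    have e3 : m + k * t0 = (m + 1) % k - 1 := by omega
    rw [e3] at e2
    omega
  set G : ℤ × ℤ → ℤ × ℤ := fun p => (σ p.1 - k * (σ p.2 / k), σ p.2 % k) with hG
  -- forward claim
  have hfwd : ∀ p ∈ B, G p ∈ A ∧ G p ≠ p0 := by
    rintro ⟨u, v⟩ hp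
    rw [hmemB] at hp
    obtain ⟨huv, hinv, hv0, hvk⟩ := hp
    have hslt : σ u < σ v := by
      rcases lt_trichotomy (σ u) (σ v) with h | h | h
      · exact h
      · exfalso; have := hinjσ _ _ h; omega
      · exfalso
        obtain ⟨hv1, hum⟩ := hcross u v huv h
        have h1 : σ u = u + 1 := hval1 u hum
        have h2 : σ v = u := by
          have hvm : v % k = (m + 1) % k := by
            rw [hv1, ← emod_add_aux k u 1, hum, emod_add_aux]
          rw [hval2 v hvm, hv1]; ring
        rw [h1, h2] at hinv
        have := hmono u hum
        omega
    set s := k * (σ v / k) with hs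
    have hbs : σ v % k = σ v - s := by rw [Int.emod_def, ← hs]
    have hGp : G (u, v) = (σ u - s, σ v - s) := by
      simp only [hG]
      rw [hbs, ← hs]
    have hfa : f (σ u - s) = f (σ u) - s := by
      have h1 := hft_aux hf (σ u) (-(σ v / k))
      have e : σ u + k * (-(σ v / k)) = σ u - s := by rw [hs]; ring
      rw [e] at h1
      rw [h1, hs]; ring
    have hfb : f (σ v - s) = f (σ v) - s := by
      have h1 := hft_aux hf (σ v) (-(σ v / k))
      have e : σ v + k * (-(σ v / k)) = σ v - s := by rw [hs]; ring
      rw [e] at h1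
      rw [h1, hs]; ring
    constructor
    · rw [hGp, hmemA]
      refine ⟨by omega, ?_, ?_, ?_⟩
      · rw [hfa, hfb]; omega
      · rw [← hbs]; exact Int.emod_nonneg _ hkne
      · rw [← hbs]; exact Int.emod_lt_of_pos _ hk0
    · rw [hGp, hp0]
      intro hcontra
      rw [Prod.mk.injEq] at hcontra
      obtain ⟨e1, e2⟩ := hcontra
      have hb : σ v % k = (m + 1) % k := by
        rw [hbs]; exact e2
      have ha : σ u % k = m % k := by
        have e3 : σ u = σ v + (-1) := by omega
        rw [e3, ← emod_add_aux k (σ v) (-1), hb, emod_add_aux,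
          show m + 1 + (-1) = m by ring]
      have hu : σ u = u - 1 := by
        by_cases h1 : u % k = m % k
        · exfalso
          have h2 : (u + 1) % k = (m + 1) % k := by
            rw [← emod_add_aux k u 1, h1, emod_add_aux]
          apply hne_aux hk
          rw [← h2, ← hval1 u h1]
          exact ha
        · by_cases h2 : u % k = (m + 1) % k
          · exact hval2 u h2
          · exfalso; rw [hval3 u h1 h2] at ha; exact h1 ha
      have hv : σ v = v + 1 := by
        by_cases h1 : v % k = m % k
        · exact hval1 v h1
        · by_cases h2 : v % k = (m + 1) % k
          · exfalso
            rw [hval2 v h2] at hb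
            have h3 : (v - 1) % k = m % k := by
              rw [show v - 1 = v + (-1) by ring, ← emod_add_aux k v (-1), h2,
                emod_add_aux, show m + 1 + (-1) = m by ring]
            exact hne_aux hk (by rw [← hb, h3])
          · exfalso; rw [hval3 v h1 h2] at hb; exact h2 hb
      omega
  -- injectivity
  have hinj : Set.InjOn G B := by
    rintro ⟨u1, v1⟩ hp1 ⟨u2, v2⟩ hp2' heq
    rw [hmemB] at hp1 hp2'
    obtain ⟨hu1, hi1, hv10, hv1k⟩ := hp1
    obtain ⟨hu2, hi2, hv20, hv2k⟩ := hp2'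
    have e2 : σ v1 % k = σ v2 % k := congrArg Prod.snd heq
    have e1 : σ u1 - k * (σ v1 / k) = σ u2 - k * (σ v2 / k) := congrArg Prod.fst heq
    obtain ⟨t, ht⟩ : k ∣ σ v2 - σ v1 := Int.ModEq.dvd e2
    have hv2' : v2 = v1 + k * t := by
      have h1 : σ v2 = σ v1 + k * t := by omega
      have h2 := hσp (σ v1) t
      rw [← h1, hinvol, hinvol] at h2
      exact h2
    have hv12 : v1 = v2 := by
      have hdv := dvd_small_aux k (v2 - v1) hk0 ⟨t, by omega⟩ (by omega) (by omega)
      omega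
    have hu12 : u1 = u2 := by
      apply hinjσ
      rw [hv12] at e1
      omega
    rw [Prod.mk.injEq]
    exact ⟨hu12, hv12⟩
  -- surjectivity
  have hsurj : ∀ q ∈ A, q ≠ p0 → q ∈ G '' B := by
    rintro ⟨a, b⟩ hq hqne
    rw [hmemA] at hq
    obtain ⟨hab, hinv, hb0, hbk⟩ := hq
    have hbb : b % k = b := Int.emod_eq_of_lt hb0 hbk
    have hslt : σ a < σ b := by
      rcases lt_trichotomy (σ a) (σ b) with h | h | h
      · exact h
      · exfalso; have := hinjσ _ _ h; omega
      · exfalso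
        obtain ⟨hb1, ham⟩ := hcross a b hab h
        apply hqne
        have hbmod : b % k = (m + 1) % k := by
          rw [hb1, ← emod_add_aux k a 1, ham, emod_add_aux]
        have hbeq : b = (m + 1) % k := by rw [← hbb, hbmod]
        rw [hp0, Prod.mk.injEq]
        omega
    set s := k * (σ b / k) with hs
    have hsb : σ b % k = σ b - s := by rw [Int.emod_def, ← hs]
    have hσa : σ (σ a - s) = a - s := by
      have h1 := hσp (σ a) (-(σ b / k))
      have e : σ a + k * (-(σ b / k)) = σ a - s := by rw [hs]; ring
      rw [e, hinvol] at h1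
      rw [h1, hs]; ring
    have hσb : σ (σ b - s) = b - s := by
      have h1 := hσp (σ b) (-(σ b / k))
      have e : σ b + k * (-(σ b / k)) = σ b - s := by rw [hs]; ring
      rw [e, hinvol] at h1
      rw [h1, hs]; ring
    have hfa : f (a - s) = f a - s := by
      have h1 := hft_aux hf a (-(σ b / k))
      have e : a + k * (-(σ b / k)) = a - s := by rw [hs]; ring
      rw [e] at h1
      rw [h1, hs]; ring
    have hfb : f (b - s) = f b - s := by
      have h1 := hft_aux hf b (-(σ b / k))
      have e : b + k * (-(σ b / k)) = b - s := by rw [hs]; ring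
      rw [e] at h1
      rw [h1, hs]; ring
    have hbs1 : (b - s) % k = b := by
      have e : b - s = b + k * (-(σ b / k)) := by rw [hs]; ring
      rw [e, Int.add_mul_emod_self_left, hbb]
    have hbs2 : k * ((b - s) / k) = -s := by
      have h3 := Int.emod_add_mul_ediv (b - s) k
      rw [hbs1] at h3
      omega
    refine ⟨(σ a - s, σ b - s), ?_, ?_⟩
    · rw [hmemB]
      refine ⟨by omega, ?_, ?_, ?_⟩
      · rw [hσa, hσb, hfa, hfb]
        omega
      · rw [← hsb]; exact Int.emod_nonneg _ hkne
      · rw [← hsb]; exact Int.emod_lt_of_pos _ hk0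
    · simp only [hG]
      rw [hσa, hσb, hbs2, hbs1, Prod.mk.injEq]
      constructor
      · ring
      · rfl
  -- counting
  have hAeq : A = insert p0 (G '' B) := by
    apply Set.Subset.antisymm
    · intro q hq
      by_cases h : q = p0
      · rw [h]; exact Set.mem_insert _ _
      · exact Set.mem_insert_of_mem _ (hsurj q hq h)
    · rintro q hq
      rcases hq with rfl | ⟨p, hp, rfl⟩
      · exact hp0A
      · exact (hfwd p hp).1
  have hfinB : B.Finite := fin_aux hk g hgf
  have hnotmem : p0 ∉ G '' B := by
    rintro ⟨p, hp, hGp⟩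
    exact (hfwd p hp).2 hGp
  have hcount : A.ncard = (G '' B).ncard + 1 := by
    rw [hAeq, Set.ncard_insert_of_notMem hnotmem (hfinB.image G)]
  have himg : (G '' B).ncard = B.ncard := Set.ncard_image_of_injOn hinj
  omega


theorem stmt_3 (k : ℤ) (hk : 2 ≤ k) (α : Equiv.Perm ℤ)
    (hα : ∀ n : ℤ, α (n + k) = α n + k) (m : ℤ) :
    (α m < α (m + 1) → invk k (⇑α ∘ sigmak k m) = invk k ⇑α + 1) ∧
    (α (m + 1) < α m → invk k (⇑α ∘ sigmak k m) + 1 = invk k ⇑α) := by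
  constructor
  · intro h
    have hσp : ∀ n : ℤ, sigmak k m (n + k) = sigmak k m n + k := fun n => by
      simpa using sigma_period k m n 1
    have hgf : ∀ n : ℤ, (⇑α ∘ sigmak k m) (n + k) = (⇑α ∘ sigmak k m) n + k := by
      intro n; simp [Function.comp, hσp, hα]
    have hgm : (⇑α ∘ sigmak k m) (m + 1) < (⇑α ∘ sigmak k m) m := by
      simp only [Function.comp_apply, sigma_m hk, sigma_m1 hk]
      exact h
    have hcore := core_aux k m hk (⇑α ∘ sigmak k m) hgf hgm
    have hcomp : (⇑α ∘ sigmak k m) ∘ sigmak k m = ⇑α := by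
      funext n
      simp [Function.comp, sigma_invol hk]
    rw [hcomp] at hcore
    omega
  · intro h
    exact core_aux k m hk ⇑α hα h
end

section
/- The group of bijections α : ℤ → ℤ with finitely many inversions is generated by the shift ι₁ (given by n ↦ n−1) together with the transpositions σ_m of m and m+1 for all m ∈ ℤ. -/
namespace Stmt5Aux

abbrev S : Set (Equiv.Perm ℤ) :=
  insert (Equiv.subRight (1 : ℤ)) {e : Equiv.Perm ℤ | ∃ m : ℤ, e = Equiv.swap m (m + 1)}

lemma subRight_mem (c : ℤ) : Equiv.subRight c ∈ Subgroup.closure S := by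
  induction c using Int.induction_on with
  | zero =>
      have h : Equiv.subRight (0 : ℤ) = 1 := by
        ext n; simp [Equiv.subRight]
      rw [h]; exact one_mem _
  | succ k ih =>
      have h : Equiv.subRight ((k : ℤ) + 1) =
          Equiv.subRight (1 : ℤ) * Equiv.subRight (k : ℤ) := by
        ext n; simp [Equiv.subRight, Equiv.Perm.mul_apply]; ring
      rw [h]
      exact mul_mem (Subgroup.subset_closure (Set.mem_insert _ _)) ih
  | pred k ih =>
      have h : Equiv.subRight (-(k : ℤ) - 1) =
          (Equiv.subRight (1 : ℤ))⁻¹ * Equiv.subRight (-(k : ℤ)) := by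
        ext n
        simp [Equiv.subRight, Equiv.Perm.inv_def, Equiv.Perm.mul_apply]
        ring
      rw [h]
      exact mul_mem (inv_mem (Subgroup.subset_closure (Set.mem_insert _ _))) ih

lemma empty_case (β : Equiv.Perm ℤ) (h : invSet ⇑β = ∅) : β ∈ Subgroup.closure S := by
  have hmono : StrictMono ⇑β := by
    apply strictMono_int_of_lt_succ
    intro n
    have h2 : ¬ (β (n + 1) < β n) := fun hc =>
      (Set.eq_empty_iff_forall_notMem.1 h) (n, n + 1) ⟨by omega, hc⟩
    have hne : β n ≠ β (n + 1) := fun hc => by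
      have := β.injective hc; omega
    exact lt_of_le_of_ne (not_lt.mp h2) hne
  have hstep : ∀ n : ℤ, β (n + 1) = β n + 1 := by
    intro n
    by_contra hne
    have hlt : β n + 1 < β (n + 1) := by
      have := hmono (show n < n + 1 by omega)
      omega
    obtain ⟨k, hk⟩ := β.surjective (β n + 1)
    rcases le_or_gt k n with hkn | hkn
    · have := hmono.monotone hkn; omega
    · have : n + 1 ≤ k := by omega
      have := hmono.monotone this; omega
  have hform : ∀ n : ℤ, β n = n + β 0 := by
    intro n
    induction n using Int.induction_on with
    | zero => ring
    | succ k ih => rw [hstep]; omega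
    | pred k ih =>
        have := hstep (-(k : ℤ) - 1)
        have h2 : (-(k:ℤ) - 1) + 1 = -(k:ℤ) := by ring
        rw [h2] at this
        omega
  have hβ : β = Equiv.subRight (-(β 0)) := by
    ext n
    simp only [Equiv.subRight_apply]
    have := hform n
    omega
  rw [hβ]
  exact subRight_mem _

lemma exists_adjacent (α : Equiv.Perm ℤ) (h : (invSet ⇑α).Nonempty) :
    ∃ m : ℤ, α (m + 1) < α m := by
  by_contra hc
  push_neg at hc
  have hmono : StrictMono ⇑α := by
    apply strictMono_int_of_lt_succ
    intro n
    have hne : α n ≠ α (n + 1) := fun hx => by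
      have := α.injective hx; omega
    exact lt_of_le_of_ne (hc n) hne
  obtain ⟨⟨u, v⟩, huv, hinv⟩ := h
  exact absurd (hmono huv) (by simpa using not_lt.mpr (le_of_lt hinv))

lemma swap_lt {m u v : ℤ} (huv : u < v) (hne : ¬(u = m ∧ v = m + 1)) :
    Equiv.swap m (m + 1) u < Equiv.swap m (m + 1) v := by
  rw [Equiv.swap_apply_def, Equiv.swap_apply_def]
  rcases not_and_or.mp hne with h | h <;> split_ifs <;> omega

lemma invSet_mul_swap (α : Equiv.Perm ℤ) (m : ℤ) (hm : α (m + 1) < α m) :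
    invSet ⇑(α * Equiv.swap m (m + 1)) =
      (fun p : ℤ × ℤ => (Equiv.swap m (m + 1) p.1, Equiv.swap m (m + 1) p.2)) ⁻¹'
        (invSet ⇑α \ {(m, m + 1)}) := by
  set s := Equiv.swap m (m + 1) with hs
  ext ⟨u, v⟩
  simp only [invSet, Set.mem_preimage, Set.mem_diff, Set.mem_singleton_iff,
    Set.mem_setOf_eq, Equiv.Perm.mul_apply, Prod.mk.injEq, not_and]
  constructor
  · rintro ⟨huv, hinv⟩
    have hne : ¬(u = m ∧ v = m + 1) := by
      rintro ⟨rfl, rfl⟩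
      rw [hs] at hinv
      simp [Equiv.swap_apply_left, Equiv.swap_apply_right] at hinv
      omega
    have hlt : s u < s v := swap_lt huv hne
    refine ⟨⟨hlt, hinv⟩, ?_⟩
    intro h1 h2
    have hu : u = m + 1 := by
      have : s (s u) = s m := by rw [h1]
      simpa [hs, Equiv.swap_apply_self, Equiv.swap_apply_left] using this
    have hv : v = m := by
      have : s (s v) = s (m + 1) := by rw [h2]
      simpa [hs, Equiv.swap_apply_self, Equiv.swap_apply_right] using this
    omega
  · rintro ⟨⟨hlt, hinv⟩, hne⟩
    have hne' : ¬(s u = m ∧ s v = m + 1) := fun ⟨h1, h2⟩ => hne h1 h2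
    have := swap_lt hlt hne'
    rw [hs] at this
    simp only [Equiv.swap_apply_self] at this
    exact ⟨this, hinv⟩

lemma preimage_eq_image (s : Equiv.Perm ℤ) (hss : ∀ x, s (s x) = x) (T : Set (ℤ × ℤ)) :
    (fun p : ℤ × ℤ => (s p.1, s p.2)) ⁻¹' T = (fun p : ℤ × ℤ => (s p.1, s p.2)) '' T := by
  ext ⟨u, v⟩
  simp only [Set.mem_preimage, Set.mem_image, Prod.exists, Prod.mk.injEq]
  constructor
  · intro h
    exact ⟨s u, s v, h, hss u, hss v⟩
  · rintro ⟨a, b, hab, rfl, rfl⟩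
    simpa [hss] using hab

lemma pair_inj (s : Equiv.Perm ℤ) :
    Function.Injective (fun p : ℤ × ℤ => (s p.1, s p.2)) := by
  rintro ⟨a, b⟩ ⟨c, d⟩ h
  simp only [Prod.mk.injEq] at h
  exact Prod.ext (s.injective h.1) (s.injective h.2)

/-- The subgroup of permutations with finitely many inversions. -/
def H : Subgroup (Equiv.Perm ℤ) where
  carrier := {α : Equiv.Perm ℤ | (invSet ⇑α).Finite}
  one_mem' := by
    show (invSet ⇑(1 : Equiv.Perm ℤ)).Finite
    have : invSet (id : ℤ → ℤ) = ∅ := by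
      ext ⟨u, v⟩; simp [invSet]; omega
    simp only [Equiv.Perm.coe_one, this]
    exact Set.finite_empty
  mul_mem' := by
    rintro a b ha hb
    simp only [Set.mem_setOf_eq] at *
    have hsub : invSet ⇑(a * b) ⊆
        invSet ⇑b ∪ (fun p : ℤ × ℤ => (b p.1, b p.2)) ⁻¹' invSet ⇑a := by
      rintro ⟨u, v⟩ ⟨huv, hinv⟩
      rw [Equiv.Perm.mul_apply, Equiv.Perm.mul_apply] at hinv
      rcases lt_trichotomy (b u) (b v) with h | h | h
      · exact Or.inr ⟨h, hinv⟩
      · exact absurd (b.injective h) (by omega)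
      · exact Or.inl ⟨huv, h⟩
    exact Set.Finite.subset (hb.union (ha.preimage (pair_inj b).injOn)) hsub
  inv_mem' := by
    rintro a ha
    simp only [Set.mem_setOf_eq] at *
    have heq : invSet ⇑a⁻¹ =
        (fun p : ℤ × ℤ => (a.symm p.2, a.symm p.1)) ⁻¹' invSet ⇑a := by
      ext ⟨u, v⟩
      simp only [invSet, Set.mem_preimage, Set.mem_setOf_eq, Equiv.Perm.inv_def,
        Equiv.apply_symm_apply]
      exact and_comm
    rw [heq]
    apply ha.preimage
    apply Function.Injective.injOn
    rintro ⟨x, y⟩ ⟨z, w⟩ h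
    simp only [Prod.mk.injEq] at h
    exact Prod.ext (a.symm.injective h.2) (a.symm.injective h.1)

lemma gen_subset : S ⊆ (H : Set (Equiv.Perm ℤ)) := by
  rintro e (rfl | ⟨m, rfl⟩)
  · show (invSet ⇑(Equiv.subRight (1 : ℤ))).Finite
    have : invSet ⇑(Equiv.subRight (1 : ℤ)) = ∅ := by
      ext ⟨u, v⟩; simp [invSet, Equiv.subRight]; omega
    simp [this]
  · show (invSet ⇑(Equiv.swap m (m + 1))).Finite
    have hsub : invSet ⇑(Equiv.swap m (m + 1)) ⊆ {((m : ℤ), m + 1)} := by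
      rintro ⟨u, v⟩ ⟨huv, hinv⟩
      rw [Equiv.swap_apply_def, Equiv.swap_apply_def] at hinv
      simp only [Set.mem_singleton_iff, Prod.mk.injEq]
      split_ifs at hinv <;> omega
    exact Set.Finite.subset (Set.finite_singleton _) hsub

end Stmt5Aux

open Stmt5Aux

theorem stmt_5 :
    ∀ α : Equiv.Perm ℤ,
      (invSet ⇑α).Finite ↔
        α ∈ Subgroup.closure
          (insert (Equiv.subRight (1 : ℤ))
            {e : Equiv.Perm ℤ | ∃ m : ℤ, e = Equiv.swap m (m + 1)}) := by
  intro α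
  constructor
  · intro hfin
    have key : ∀ n : ℕ, ∀ β : Equiv.Perm ℤ, (invSet ⇑β).Finite →
        (invSet ⇑β).ncard ≤ n → β ∈ Subgroup.closure S := by
      intro n
      induction n with
      | zero =>
          intro β hfinβ hcard
          have h0 : (invSet ⇑β).ncard = 0 := Nat.le_zero.mp hcard
          have hempty : invSet ⇑β = ∅ := by
            rcases (Set.ncard_eq_zero hfinβ).mp h0 with h
            exact h
          exact empty_case β hempty
      | succ n ih =>
          intro β hfinβ hcard
          rcases Set.eq_empty_or_nonempty (invSet ⇑β) with hempty | hne
          · exact empty_case β hempty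
          · obtain ⟨m, hm⟩ := exists_adjacent β hne
            set s := Equiv.swap m (m + 1) with hsdef
            have hmem : ((m : ℤ), m + 1) ∈ invSet ⇑β := ⟨by omega, hm⟩
            have heq := invSet_mul_swap β m hm
            have himg : invSet ⇑(β * s) =
                (fun p : ℤ × ℤ => (s p.1, s p.2)) '' (invSet ⇑β \ {(m, m + 1)}) := by
              rw [heq, preimage_eq_image]
              intro x; simp [hsdef, Equiv.swap_apply_self]
            have hfin' : (invSet ⇑(β * s)).Finite := by
              rw [himg]
              exact hfinβ.diff.image _
            have hcard' : (invSet ⇑(β * s)).ncard ≤ n := by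
              rw [himg, Set.ncard_image_of_injective _ (pair_inj s),
                Set.ncard_diff_singleton_of_mem hmem]
              have hpos : 0 < (invSet ⇑β).ncard := by
                rw [Set.ncard_pos hfinβ]; exact hne
              omega
            have hβs : β * s ∈ Subgroup.closure S := ih (β * s) hfin' hcard'
            have hswap : s ∈ Subgroup.closure S :=
              Subgroup.subset_closure (Set.mem_insert_iff.mpr (Or.inr ⟨m, rfl⟩))
            have : β * s * s = β := by
              rw [mul_assoc, hsdef, Equiv.swap_mul_self, mul_one]
            rw [← this]
            exact mul_mem hβs hswap
    exact key (invSet ⇑α).ncard α hfin le_rfl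
  · intro hmem
    have hle : Subgroup.closure S ≤ H := (Subgroup.closure_le H).mpr gen_subset
    exact hle hmem
end

section
/- Let α, β be almost-sign-preserving permutations of ℤ and a, b ∈ ℤ. Then the minimum of s_α(a,ℓ) + s_β(ℓ,b) over ℓ ∈ ℤ exists and is attained at some ℓ with β⁻¹(ℓ−1) < b ≤ β⁻¹(ℓ). -/
/-- `s_α(a,b) = #{n ≥ b : α(n) < a}`. -/
noncomputable def sPerm (α : ℤ → ℤ) (a b : ℤ) : ℕ := {n : ℤ | b ≤ n ∧ α n < a}.ncard

/-- Almost-sign-preserving. -/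
def ASP (α : ℤ → ℤ) : Prop :=
  {n : ℤ | 0 ≤ n ∧ α n < 0}.Finite ∧ {n : ℤ | n < 0 ∧ 0 ≤ α n}.Finite

lemma asp_fin1 (α : Equiv.Perm ℤ) (hα : ASP ⇑α) (a b : ℤ) :
    {n : ℤ | b ≤ n ∧ α n < a}.Finite := by
  have h3 : ((⇑α.symm) '' Set.Ico 0 a).Finite := (Set.finite_Ico 0 a).image _
  refine (((Set.finite_Ico b 0).union hα.1).union h3).subset ?_
  rintro n ⟨hb, ha⟩
  rcases lt_or_ge n 0 with h | h
  · exact Or.inl (Or.inl ⟨hb, h⟩)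
  rcases lt_or_ge (α n) 0 with h2 | h2
  · exact Or.inl (Or.inr ⟨h, h2⟩)
  · exact Or.inr ⟨α n, ⟨h2, ha⟩, α.symm_apply_apply n⟩

lemma asp_fin2 (α : Equiv.Perm ℤ) (hα : ASP ⇑α) (a b : ℤ) :
    {n : ℤ | n < b ∧ a ≤ α n}.Finite := by
  have h3 : ((⇑α.symm) '' Set.Ico a 0).Finite := (Set.finite_Ico a 0).image _
  refine (((Set.finite_Ico 0 b).union hα.2).union h3).subset ?_
  rintro n ⟨hb, ha⟩
  rcases le_or_gt 0 n with h | h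
  · exact Or.inl (Or.inl ⟨h, hb⟩)
  rcases le_or_gt 0 (α n) with h2 | h2
  · exact Or.inl (Or.inr ⟨h, h2⟩)
  · exact Or.inr ⟨α n, ⟨ha, h2⟩, α.symm_apply_apply n⟩

lemma asp_symm (β : Equiv.Perm ℤ) (hβ : ASP ⇑β) : ASP ⇑β.symm := by
  constructor
  · refine (hβ.2.image ⇑β).subset ?_
    rintro n ⟨h1, h2⟩
    exact ⟨β.symm n, ⟨h2, by rw [Equiv.apply_symm_apply]; exact h1⟩, Equiv.apply_symm_apply β n⟩
  · refine (hβ.1.image ⇑β).subset ?_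
    rintro n ⟨h1, h2⟩
    exact ⟨β.symm n, ⟨h2, by rw [Equiv.apply_symm_apply]; exact h1⟩, Equiv.apply_symm_apply β n⟩

lemma stepA (α : Equiv.Perm ℤ) (hα : ASP ⇑α) (a j : ℤ) :
    sPerm ⇑α a j = sPerm ⇑α a (j + 1) + (if α j < a then 1 else 0) := by
  by_cases h : α j < a
  · rw [if_pos h]
    have hset : {n : ℤ | j ≤ n ∧ α n < a} = insert j {n : ℤ | j + 1 ≤ n ∧ α n < a} := by
      ext n
      simp only [Set.mem_setOf_eq, Set.mem_insert_iff]
      constructor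
      · rintro ⟨h1, h2⟩
        rcases eq_or_ne n j with rfl | hne
        · exact Or.inl rfl
        · exact Or.inr ⟨by omega, h2⟩
      · rintro (rfl | ⟨h1, h2⟩)
        · exact ⟨le_refl _, h⟩
        · exact ⟨by omega, h2⟩
    have hnm : j ∉ {n : ℤ | j + 1 ≤ n ∧ α n < a} := by
      simp only [Set.mem_setOf_eq]; omega
    rw [sPerm, sPerm, hset, Set.ncard_insert_of_notMem hnm (asp_fin1 α hα a (j + 1))]
  · rw [if_neg h]
    have hset : {n : ℤ | j ≤ n ∧ α n < a} = {n : ℤ | j + 1 ≤ n ∧ α n < a} := by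
      ext n
      simp only [Set.mem_setOf_eq]
      constructor
      · rintro ⟨h1, h2⟩
        refine ⟨?_, h2⟩
        rcases eq_or_ne n j with rfl | hne
        · exact absurd h2 h
        · omega
      · rintro ⟨h1, h2⟩
        exact ⟨by omega, h2⟩
    rw [sPerm, sPerm, hset, Nat.add_zero]

lemma stepB (β : Equiv.Perm ℤ) (hβ : ASP ⇑β) (b j : ℤ) :
    sPerm ⇑β (j + 1) b = sPerm ⇑β j b + (if b ≤ β.symm j then 1 else 0) := by
  by_cases h : b ≤ β.symm j
  · rw [if_pos h]
    have hset : {n : ℤ | b ≤ n ∧ β n < j + 1}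
        = insert (β.symm j) {n : ℤ | b ≤ n ∧ β n < j} := by
      ext n
      simp only [Set.mem_setOf_eq, Set.mem_insert_iff]
      constructor
      · rintro ⟨h1, h2⟩
        rcases eq_or_ne (β n) j with hj | hne
        · exact Or.inl (by rw [← hj, Equiv.symm_apply_apply])
        · exact Or.inr ⟨h1, by omega⟩
      · rintro (rfl | ⟨h1, h2⟩)
        · exact ⟨h, by rw [Equiv.apply_symm_apply]; omega⟩
        · exact ⟨h1, by omega⟩
    have hnm : β.symm j ∉ {n : ℤ | b ≤ n ∧ β n < j} := by
      simp only [Set.mem_setOf_eq, Equiv.apply_symm_apply]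
      omega
    rw [sPerm, sPerm, hset, Set.ncard_insert_of_notMem hnm (asp_fin1 β hβ j b)]
  · rw [if_neg h]
    have hset : {n : ℤ | b ≤ n ∧ β n < j + 1} = {n : ℤ | b ≤ n ∧ β n < j} := by
      ext n
      simp only [Set.mem_setOf_eq]
      constructor
      · rintro ⟨h1, h2⟩
        refine ⟨h1, ?_⟩
        rcases eq_or_ne (β n) j with hj | hne
        · exfalso
          apply h
          rw [← hj, Equiv.symm_apply_apply]
          exact h1
        · omega
      · rintro ⟨h1, h2⟩
        exact ⟨h1, by omega⟩
    rw [sPerm, sPerm, hset, Nat.add_zero]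

theorem stmt_6 (α β : Equiv.Perm ℤ) (hα : ASP ⇑α) (hβ : ASP ⇑β) (a b : ℤ) :
    ∃ l : ℤ, (β.symm (l - 1) < b ∧ b ≤ β.symm l) ∧
      IsLeast (Set.range fun j : ℤ => sPerm ⇑α a j + sPerm ⇑β j b)
        (sPerm ⇑α a l + sPerm ⇑β l b) := by
  classical
  set f : ℤ → ℕ := fun j : ℤ => sPerm ⇑α a j + sPerm ⇑β j b with hf
  have hβs := asp_symm β hβ
  have step : ∀ j : ℤ, f j + (if b ≤ β.symm j then 1 else 0)
      = f (j + 1) + (if α j < a then 1 else 0) := by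
    intro j
    have h1 := stepA α hα a j
    have h2 := stepB β hβ b j
    simp only [hf]
    rw [h1, h2]
    ring
  have stepUp : ∀ j : ℤ, b ≤ β.symm j → f j ≤ f (j + 1) := by
    intro j hj
    have := step j
    rw [if_pos hj] at this
    split_ifs at this <;> omega
  have stepDown : ∀ j : ℤ, β.symm j < b → f (j + 1) ≤ f j := by
    intro j hj
    have := step j
    rw [if_neg (by omega : ¬ b ≤ β.symm j)] at this
    split_ifs at this <;> omega
  have monoUp : ∀ l k : ℤ, l ≤ k → (∀ m, l ≤ m → m < k → b ≤ β.symm m) → f l ≤ f k := by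
    intro l k hlk
    refine Int.le_induction (motive := fun k _ =>
      (∀ m, l ≤ m → m < k → b ≤ β.symm m) → f l ≤ f k) ?_ ?_ k hlk
    · intro _; exact le_refl _
    · intro k hk ih hall
      exact le_trans (ih fun m h1 h2 => hall m h1 (by omega))
        (stepUp k (hall k hk (by omega)))
  have monoDown : ∀ l k : ℤ, l ≤ k → (∀ m, l ≤ m → m < k → β.symm m < b) → f k ≤ f l := by
    intro l k hlk
    refine Int.le_induction (motive := fun k _ =>
      (∀ m, l ≤ m → m < k → β.symm m < b) → f k ≤ f l) ?_ ?_ k hlk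
    · intro _; exact le_refl _
    · intro k hk ih hall
      exact le_trans (stepDown k (hall k hk (by omega)))
        (ih fun m h1 h2 => hall m h1 (by omega))
  -- minimum of f
  have hne : (Set.range f).Nonempty := Set.range_nonempty f
  set c := sInf (Set.range f) with hc
  have hcmem : c ∈ Set.range f := Nat.sInf_mem hne
  have hleast : IsLeast (Set.range f) c := ⟨hcmem, fun x hx => Nat.sInf_le hx⟩
  obtain ⟨j₀, hj₀⟩ := hcmem
  -- Phase 1: some N ≥ j₀ with b ≤ β.symm N
  have hup : ∃ N : ℤ, j₀ ≤ N ∧ b ≤ β.symm N := by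
    obtain ⟨N, hN⟩ := (asp_fin1 β.symm hβs b j₀).bddAbove
    refine ⟨max (N + 1) j₀, le_max_right _ _, ?_⟩
    by_contra hcon
    push_neg at hcon
    have := hN ⟨le_max_right _ _, hcon⟩
    have := le_max_left (N + 1) j₀
    omega
  -- least j₁ ≥ j₀ with b ≤ β.symm j₁
  obtain ⟨j₁, ⟨hj₁0, hj₁b⟩, hj₁min⟩ :=
    Int.exists_least_of_bdd (P := fun z => j₀ ≤ z ∧ b ≤ β.symm z)
      ⟨j₀, fun z hz => hz.1⟩ hup
  have hf1 : f j₁ ≤ f j₀ := by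
    refine monoDown j₀ j₁ hj₁0 fun m h1 h2 => ?_
    by_contra hcon
    push_neg at hcon
    have := hj₁min m ⟨h1, hcon⟩
    omega
  -- Phase 2: some M < j₁ with β.symm M < b
  have hdown : ∃ M : ℤ, M < j₁ ∧ β.symm M < b := by
    obtain ⟨M, hM⟩ := (asp_fin2 β.symm hβs b j₁).bddBelow
    have hmr := min_le_right (M - 1) (j₁ - 1)
    have hml := min_le_left (M - 1) (j₁ - 1)
    refine ⟨min (M - 1) (j₁ - 1), by omega, ?_⟩
    by_contra hcon
    push_neg at hcon
    have := hM ⟨by omega, hcon⟩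
    omega
  -- greatest t < j₁ with β.symm t < b
  obtain ⟨t, ⟨ht1, ht2⟩, htmax⟩ :=
    Int.exists_greatest_of_bdd (P := fun z => z < j₁ ∧ β.symm z < b)
      ⟨j₁, fun z hz => le_of_lt hz.1⟩ hdown
  refine ⟨t + 1, ⟨by simpa using ht2, ?_⟩, ?_⟩
  · -- b ≤ β.symm (t+1)
    rcases eq_or_lt_of_le (by omega : t + 1 ≤ j₁) with heq | hlt
    · rw [heq]; exact hj₁b
    · by_contra hcon
      push_neg at hcon
      have := htmax (t + 1) ⟨hlt, hcon⟩
      omega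
  · -- IsLeast
    have hall : ∀ m, t + 1 ≤ m → m < j₁ → b ≤ β.symm m := by
      intro m h1 h2
      by_contra hcon
      push_neg at hcon
      have := htmax m ⟨h2, hcon⟩
      omega
    have hfl : f (t + 1) ≤ f j₁ := monoUp (t + 1) j₁ (by omega) hall
    have hflc : f (t + 1) = c := by
      have h1 : c ≤ f (t + 1) := hleast.2 ⟨t + 1, rfl⟩
      omega
    have : sPerm ⇑α a (t + 1) + sPerm ⇑β (t + 1) b = c := hflc
    rw [this]
    exact hleast
end

section
/- Let α be an almost-sign-preserving permutation of ℤ and ι_m the shift n ↦ n − m. Then for all a, b ∈ ℤ, min over ℓ ∈ ℤ of (s_α(a,ℓ) + s_{ι_m}(ℓ,b)) equals s_{α ∘ ι_m}(a,b). -/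
lemma finite_sset (α : Equiv.Perm ℤ) (hα : ASP ⇑α) (a c : ℤ) :
    {n : ℤ | c ≤ n ∧ α n < a}.Finite := by
  have h1 : {n : ℤ | c ≤ n ∧ α n < a} ⊆
      (Set.Ico c 0 ∪ {n : ℤ | 0 ≤ n ∧ α n < 0}) ∪ (⇑α ⁻¹' Set.Ico 0 a) := by
    rintro n ⟨hc, ha⟩
    rcases lt_or_ge n 0 with h | h
    · exact Or.inl (Or.inl ⟨hc, h⟩)
    rcases lt_or_ge (α n) 0 with h' | h'
    · exact Or.inl (Or.inr ⟨h, h'⟩)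
    · exact Or.inr ⟨h', ha⟩
  exact (((Set.finite_Ico c 0).union hα.1).union
    ((Set.finite_Ico 0 a).preimage α.injective.injOn)).subset h1

lemma comp_eq (α : Equiv.Perm ℤ) (m a b : ℤ) :
    sPerm (⇑α ∘ fun n : ℤ => n - m) a b = sPerm ⇑α a (b - m) := by
  unfold sPerm
  have h : {n : ℤ | b - m ≤ n ∧ α n < a} =
      (fun n : ℤ => n - m) '' {n : ℤ | b ≤ n ∧ (⇑α ∘ fun n : ℤ => n - m) n < a} := by
    ext k
    constructor
    · rintro ⟨h1, h2⟩
      exact ⟨k + m, ⟨by omega, by simpa using h2⟩, by ring⟩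
    · rintro ⟨n, ⟨h1, h2⟩, rfl⟩
      refine ⟨?_, by simpa using h2⟩
      show b - m ≤ n - m
      omega
  rw [h, Set.ncard_image_of_injective _ (fun x y h => by omega)]

lemma iota_sperm (m l b : ℤ) : sPerm (fun n : ℤ => n - m) l b = (l + m - b).toNat := by
  unfold sPerm
  have h : {n : ℤ | b ≤ n ∧ n - m < l} = Set.Ico b (l + m) := by
    ext n; simp [Set.mem_Ico]; omega
  rw [h, ← Finset.coe_Ico, Set.ncard_coe_finset, Int.card_Ico]

theorem stmt_7 (α : Equiv.Perm ℤ) (hα : ASP ⇑α) (m : ℤ) (a b : ℤ) :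
    IsLeast
      (Set.range fun l : ℤ => sPerm ⇑α a l + sPerm (fun n : ℤ => n - m) l b)
      (sPerm (⇑α ∘ fun n : ℤ => n - m) a b) := by
  constructor
  · refine ⟨b - m, ?_⟩
    simp only [iota_sperm, comp_eq]
    simp
  · rintro x ⟨l, rfl⟩
    simp only [comp_eq, iota_sperm]
    unfold sPerm
    have hsub : {n : ℤ | b - m ≤ n ∧ α n < a} ⊆
        {n : ℤ | l ≤ n ∧ α n < a} ∪ Set.Ico (b - m) l := by
      rintro n ⟨h1, h2⟩
      rcases le_or_gt l n with h | h
      · exact Or.inl ⟨h, h2⟩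
      · exact Or.inr ⟨h1, h⟩
    have hIco : (Set.Ico (b - m) l).ncard = (l - (b - m)).toNat := by
      rw [← Finset.coe_Ico, Set.ncard_coe_finset, Int.card_Ico]
    calc {n : ℤ | b - m ≤ n ∧ α n < a}.ncard
        ≤ ({n : ℤ | l ≤ n ∧ α n < a} ∪ Set.Ico (b - m) l).ncard :=
          Set.ncard_le_ncard hsub ((finite_sset α hα a l).union (Set.finite_Ico _ _))
      _ ≤ {n : ℤ | l ≤ n ∧ α n < a}.ncard + (Set.Ico (b - m) l).ncard :=
          Set.ncard_union_le _ _
      _ ≤ _ := by rw [hIco]; omega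
end

section
/- Let k ≥ 0 (k ≠ 1), α ∈ S̃_k, and σ^k_m a simple reflection. If α(m) < α(m+1), then min_ℓ (s_α(a,ℓ) + s_{σ^k_m}(ℓ,b)) = s_{α ∘ σ^k_m}(a,b) for all a,b; if α(m) > α(m+1), then this minimum equals s_α(a,b) for all a,b. -/
/-- Membership in `S̃_k`: finitely many inversions if `k = 0`, the extended affine
condition if `k ≥ 2`. -/
def memSk (k : ℤ) (α : Equiv.Perm ℤ) : Prop :=
  if k = 0 then (invSet ⇑α).Finite else ∀ n : ℤ, α (n + k) = α n + k

open Set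

namespace Stmt9

variable {k m : ℤ}


variable {k m : ℤ}

lemma mod_succ_ne (hk : 0 ≤ k) (hk1 : k ≠ 1) (x : ℤ) : (x + 1) % k ≠ x % k := by
  intro h
  have hd : k ∣ x - (x + 1) := Int.ModEq.dvd h
  have h1 : k ∣ 1 := by
    have he : x - (x + 1) = -1 := by ring
    rw [he] at hd
    exact (dvd_neg).mp hd
  have := Int.isUnit_iff.mp (isUnit_of_dvd_one h1)
  omega

lemma sig_of_m {n : ℤ} (h : n % k = m % k) : sigmak k m n = n + 1 := by
  unfold sigmak; rw [if_pos h]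

lemma sig_of_m1 (hk : 0 ≤ k) (hk1 : k ≠ 1) {n : ℤ} (h : n % k = (m + 1) % k) :
    sigmak k m n = n - 1 := by
  unfold sigmak
  rw [if_neg (fun hh => mod_succ_ne hk hk1 m (h.symm.trans hh)), if_pos h]

lemma sig_of_other {n : ℤ} (h1 : n % k ≠ m % k) (h2 : n % k ≠ (m + 1) % k) :
    sigmak k m n = n := by
  unfold sigmak; rw [if_neg h1, if_neg h2]

lemma sig_cases (n : ℤ) :
    (n % k = m % k ∧ sigmak k m n = n + 1) ∨
    (n % k ≠ m % k ∧ n % k = (m + 1) % k ∧ sigmak k m n = n - 1) ∨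
    (n % k ≠ m % k ∧ n % k ≠ (m + 1) % k ∧ sigmak k m n = n) := by
  unfold sigmak
  split_ifs with h1 h2
  · exact Or.inl ⟨h1, rfl⟩
  · exact Or.inr (Or.inl ⟨h1, h2, rfl⟩)
  · exact Or.inr (Or.inr ⟨h1, h2, rfl⟩)

lemma sig_ge (n : ℤ) : n - 1 ≤ sigmak k m n := by
  unfold sigmak; split_ifs <;> omega

lemma sig_le (n : ℤ) : sigmak k m n ≤ n + 1 := by
  unfold sigmak; split_ifs <;> omega

lemma mod_add_one {x y : ℤ} (h : x % k = y % k) : (x + 1) % k = (y + 1) % k :=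
  Int.ModEq.add_right 1 h

lemma mod_sub_one {x y : ℤ} (h : x % k = y % k) : (x - 1) % k = (y - 1) % k :=
  Int.ModEq.sub_right 1 h

lemma sig_invol (hk : 0 ≤ k) (hk1 : k ≠ 1) (n : ℤ) :
    sigmak k m (sigmak k m n) = n := by
  rcases sig_cases (k := k) (m := m) n with ⟨h1, h2⟩ | ⟨h0, h1, h2⟩ | ⟨h0, h1, h2⟩
  · rw [h2]
    have hm : (n + 1) % k = (m + 1) % k := mod_add_one h1
    rw [sig_of_m1 hk hk1 hm]; ring
  · rw [h2]
    have hm : (n - 1) % k = m % k := by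
      have := mod_sub_one h1
      simpa using this
    rw [sig_of_m hm]; ring
  · rw [h2, sig_of_other h0 h1]

lemma sig_injective (hk : 0 ≤ k) (hk1 : k ≠ 1) : Function.Injective (sigmak k m) :=
  Function.LeftInverse.injective (g := sigmak k m) (fun n => sig_invol hk hk1 n)


/-- step lemma -/
lemma sPerm_step (α : ℤ → ℤ) (a l : ℤ) (hf : {n : ℤ | l + 1 ≤ n ∧ α n < a}.Finite) :
    sPerm α a l = sPerm α a (l + 1) + (if α l < a then 1 else 0) := by
  unfold sPerm
  by_cases h : α l < a
  · rw [if_pos h]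
    have hs : {n : ℤ | l ≤ n ∧ α n < a} = insert l {n : ℤ | l + 1 ≤ n ∧ α n < a} := by
      ext n
      simp only [mem_setOf_eq, mem_insert_iff]
      constructor
      · rintro ⟨h1, h2⟩
        rcases eq_or_lt_of_le h1 with h3 | h3
        · exact Or.inl h3.symm
        · exact Or.inr ⟨h3, h2⟩
      · rintro (rfl | ⟨h1, h2⟩)
        · exact ⟨le_refl _, h⟩
        · exact ⟨by omega, h2⟩
    rw [hs, Set.ncard_insert_of_notMem (by simp) hf]
  · rw [if_neg h]
    have hs : {n : ℤ | l ≤ n ∧ α n < a} = {n : ℤ | l + 1 ≤ n ∧ α n < a} := by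
      ext n
      simp only [mem_setOf_eq]
      constructor
      · rintro ⟨h1, h2⟩
        have : n ≠ l := fun e => h (e ▸ h2)
        exact ⟨by omega, h2⟩
      · rintro ⟨h1, h2⟩
        exact ⟨by omega, h2⟩
    rw [hs]; simp

lemma fin_shift {α : ℤ → ℤ} {a b : ℤ} (hf : {n : ℤ | b ≤ n ∧ α n < a}.Finite) (l : ℤ) :
    {n : ℤ | l ≤ n ∧ α n < a}.Finite := by
  apply (hf.union (Set.finite_Ico l b)).subset
  rintro n ⟨h1, h2⟩
  by_cases hb : b ≤ n
  · exact Or.inl ⟨hb, h2⟩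
  · exact Or.inr ⟨h1, by omega⟩

lemma sigSet_fin (l b : ℤ) : {n : ℤ | b ≤ n ∧ sigmak k m n < l}.Finite := by
  apply (Set.finite_Icc b l).subset
  rintro n ⟨h1, h2⟩
  have := sig_ge (k := k) (m := m) n
  exact ⟨h1, by omega⟩

lemma sPerm_sig_bb (hk : 0 ≤ k) (hk1 : k ≠ 1) (b : ℤ) :
    sPerm (sigmak k m) b b = if b % k = (m + 1) % k then 1 else 0 := by
  unfold sPerm
  split_ifs with hb
  · rw [show {n : ℤ | b ≤ n ∧ sigmak k m n < b} = {b} from ?_, Set.ncard_singleton]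
    ext n
    simp only [mem_setOf_eq, mem_singleton_iff]
    constructor
    · rintro ⟨h1, h2⟩
      have := sig_ge (k := k) (m := m) n
      omega
    · rintro rfl
      rw [sig_of_m1 hk hk1 hb]
      omega
  · rw [show {n : ℤ | b ≤ n ∧ sigmak k m n < b} = ∅ from ?_, Set.ncard_empty]
    ext n
    simp only [mem_setOf_eq, mem_empty_iff_false, iff_false, not_and, not_lt]
    intro h1
    rcases sig_cases (k := k) (m := m) n with ⟨_, h2⟩ | ⟨_, hc, h2⟩ | ⟨_, _, h2⟩
    · omega
    · have hg := sig_ge (k := k) (m := m) n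
      rcases eq_or_lt_of_le h1 with rfl | h3
      · exact absurd hc hb
      · omega
    · omega

lemma sPerm_sig_b1b (hk : 0 ≤ k) (hk1 : k ≠ 1) {b : ℤ} (hb : b % k = (m + 1) % k) :
    sPerm (sigmak k m) (b + 1) b = 1 := by
  unfold sPerm
  rw [show {n : ℤ | b ≤ n ∧ sigmak k m n < b + 1} = {b} from ?_, Set.ncard_singleton]
  ext n
  simp only [mem_setOf_eq, mem_singleton_iff]
  constructor
  · rintro ⟨h1, h2⟩
    have hg := sig_ge (k := k) (m := m) n
    have hn : n = b ∨ n = b + 1 := by omega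
    rcases hn with rfl | rfl
    · rfl
    · exfalso
      rcases sig_cases (k := k) (m := m) (b + 1) with ⟨_, h3⟩ | ⟨_, hc, h3⟩ | ⟨_, _, h3⟩
      · omega
      · exact mod_succ_ne hk hk1 b (hc.trans hb.symm)
      · omega
  · rintro rfl
    rw [sig_of_m1 hk hk1 hb]
    omega

lemma sPerm_sig_bm1 (b : ℤ) : sPerm (sigmak k m) (b - 1) b = 0 := by
  unfold sPerm
  rw [show {n : ℤ | b ≤ n ∧ sigmak k m n < b - 1} = ∅ from ?_, Set.ncard_empty]
  ext n
  simp only [mem_setOf_eq, mem_empty_iff_false, iff_false, not_and, not_lt]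
  intro h1
  have := sig_ge (k := k) (m := m) n
  omega

lemma toNat_le_sPerm_sig (hk : 0 ≤ k) (hk1 : k ≠ 1) (l b : ℤ) :
    (l - b).toNat ≤ sPerm (sigmak k m) l b := by
  rcases le_or_gt l b with h | h
  · omega
  classical
  set J : ℤ → ℤ := fun p => if p = b ∧ b % k = (m + 1) % k then b else sigmak k m p with hJ
  have himg : J '' (Set.Ico b l) ⊆ {n : ℤ | b ≤ n ∧ sigmak k m n < l} := by
    rintro n ⟨p, hp, rfl⟩
    simp only [Set.mem_Ico] at hp
    by_cases hc : p = b ∧ b % k = (m + 1) % k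
    · simp only [hJ, if_pos hc]
      refine ⟨le_refl _, ?_⟩
      rw [sig_of_m1 hk hk1 hc.2]
      omega
    · simp only [hJ, if_neg hc]
      constructor
      · rcases sig_cases (k := k) (m := m) p with ⟨_, h2⟩ | ⟨hcm, hcc, h2⟩ | ⟨_, _, h2⟩
        · omega
        · have : p ≠ b := fun e => hc ⟨e, by rw [← e]; exact hcc⟩
          omega
        · omega
      · rw [sig_invol hk hk1 p]
        exact hp.2
  have key : ∀ x : ℤ, b % k = (m + 1) % k → b ≤ x →
      ¬(x = b ∧ b % k = (m + 1) % k) → sigmak k m x = b → False := by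
    intro x hb hx hnc he2
    rcases sig_cases (k := k) (m := m) x with ⟨_, h2⟩ | ⟨_, hcc, h2⟩ | ⟨_, hcc, h2⟩
    · omega
    · have hx1 : x = b + 1 := by omega
      subst hx1
      exact mod_succ_ne hk hk1 b (hcc.trans hb.symm)
    · have hx1 : x = b := by omega
      subst hx1
      exact hcc hb
  have hinj : Set.InjOn J (Set.Ico b l) := by
    intro p hp q hq he
    simp only [Set.mem_Ico] at hp hq
    by_cases hcp : p = b ∧ b % k = (m + 1) % k <;>
      by_cases hcq : q = b ∧ b % k = (m + 1) % k
    · exact hcp.1.trans hcq.1.symm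
    · simp only [hJ, if_pos hcp, if_neg hcq] at he
      exact (key q hcp.2 hq.1 hcq he.symm).elim
    · simp only [hJ, if_neg hcp, if_pos hcq] at he
      exact (key p hcq.2 hp.1 hcp he).elim
    · simp only [hJ, if_neg hcp, if_neg hcq] at he
      exact sig_injective hk hk1 he
  have h1 : (Set.Ico b l).ncard = (l - b).toNat := by
    rw [← Finset.coe_Ico, Set.ncard_coe_finset, Int.card_Ico]
  have h2 : (J '' Set.Ico b l).ncard ≤ sPerm (sigmak k m) l b :=
    Set.ncard_le_ncard himg (sigSet_fin l b)
  have h3 : (J '' Set.Ico b l).ncard = (Set.Ico b l).ncard :=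
    Set.ncard_image_of_injOn hinj
  omega


lemma alpha_shift (hk0 : k ≠ 0) {α : Equiv.Perm ℤ} (hα : memSk k α) (t n : ℤ) :
    α (n + t * k) = α n + t * k := by
  have hα' : ∀ n : ℤ, α (n + k) = α n + k := by
    unfold memSk at hα
    rwa [if_neg hk0] at hα
  induction t using Int.induction_on with
  | zero => simp
  | succ t ih =>
      have h2 : n + ((t : ℤ) + 1) * k = (n + t * k) + k := by ring
      rw [h2, hα', ih]
      ring
  | pred t ih =>
      have h2 : (n + (-(t : ℤ) - 1) * k) + k = n + (-(t : ℤ)) * k := by ring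
      have h3 := hα' (n + (-(t : ℤ) - 1) * k)
      rw [h2, ih] at h3
      omega

lemma order_shift (hk : 0 ≤ k) (hk1 : k ≠ 1) {α : Equiv.Perm ℤ} (hα : memSk k α)
    {b : ℤ} (hb : b % k = (m + 1) % k) :
    ∃ c : ℤ, α (b - 1) = α m + c ∧ α b = α (m + 1) + c := by
  by_cases hk0 : k = 0
  · subst hk0
    simp only [Int.emod_zero] at hb
    subst hb
    refine ⟨0, ?_, ?_⟩ <;> simp
  · obtain ⟨t, ht⟩ : k ∣ b - (m + 1) := Int.ModEq.dvd (Int.ModEq.symm hb)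
    refine ⟨t * k, ?_, ?_⟩
    · have hb1 : b - 1 = m + t * k := by rw [mul_comm t k]; omega
      rw [hb1, alpha_shift hk0 hα t m]
    · have hb2 : b = (m + 1) + t * k := by rw [mul_comm t k]; omega
      rw [hb2, alpha_shift hk0 hα t (m + 1)]


lemma inf_shift {α : ℤ → ℤ} {a b : ℤ} (hf : ¬ {n : ℤ | b ≤ n ∧ α n < a}.Finite) (l : ℤ) :
    ¬ {n : ℤ | l ≤ n ∧ α n < a}.Finite :=
  fun h => hf (fin_shift h b)

/-- The composed set is infinite when the base set is. -/
lemma comp_infinite (hk : 0 ≤ k) (hk1 : k ≠ 1) {α : ℤ → ℤ} {a b : ℤ}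
    (hf : ¬ {n : ℤ | b ≤ n ∧ α n < a}.Finite) :
    ¬ {n : ℤ | b ≤ n ∧ α (sigmak k m n) < a}.Finite := by
  intro h
  apply inf_shift hf (b + 1)
  have hsub : sigmak k m '' {n : ℤ | b + 1 ≤ n ∧ α n < a} ⊆
      {n : ℤ | b ≤ n ∧ α (sigmak k m n) < a} := by
    rintro n ⟨p, ⟨hp1, hp2⟩, rfl⟩
    have := sig_ge (k := k) (m := m) p
    refine ⟨by omega, ?_⟩
    rwa [sig_invol hk hk1 p]
  have himg : (sigmak k m '' {n : ℤ | b + 1 ≤ n ∧ α n < a}).Finite := h.subset hsub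
  have := Set.Finite.of_finite_image himg ((sig_injective (m := m) hk hk1).injOn)
  exact this

lemma lower1 (hk : 0 ≤ k) (hk1 : k ≠ 1) (α : ℤ → ℤ) (a b l : ℤ) :
    sPerm (α ∘ sigmak k m) a b ≤ sPerm α a l + sPerm (sigmak k m) l b := by
  by_cases hfin : {n : ℤ | l ≤ n ∧ α n < a}.Finite
  · have hsub : {n : ℤ | b ≤ n ∧ α (sigmak k m n) < a} ⊆
        {n : ℤ | b ≤ n ∧ sigmak k m n < l} ∪ sigmak k m '' {n : ℤ | l ≤ n ∧ α n < a} := by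
      rintro n ⟨h1, h2⟩
      rcases lt_or_ge (sigmak k m n) l with h3 | h3
      · exact Or.inl ⟨h1, h3⟩
      · exact Or.inr ⟨sigmak k m n, ⟨h3, h2⟩, sig_invol hk hk1 n⟩
    have hU : ({n : ℤ | b ≤ n ∧ sigmak k m n < l} ∪
        sigmak k m '' {n : ℤ | l ≤ n ∧ α n < a}).Finite :=
      (sigSet_fin l b).union (hfin.image _)
    have h4 : sPerm (α ∘ sigmak k m) a b ≤
        ({n : ℤ | b ≤ n ∧ sigmak k m n < l} ∪
          sigmak k m '' {n : ℤ | l ≤ n ∧ α n < a}).ncard :=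
      Set.ncard_le_ncard hsub hU
    have h5 := Set.ncard_union_le {n : ℤ | b ≤ n ∧ sigmak k m n < l}
      (sigmak k m '' {n : ℤ | l ≤ n ∧ α n < a})
    have h6 : (sigmak k m '' {n : ℤ | l ≤ n ∧ α n < a}).ncard = sPerm α a l :=
      Set.ncard_image_of_injective _ (sig_injective hk hk1)
    unfold sPerm at *
    omega
  · have h0 : sPerm (α ∘ sigmak k m) a b = 0 := by
      have := comp_infinite (k := k) (m := m) hk hk1 (a := a) (b := b) (α := α)
        (inf_shift hfin b)
      unfold sPerm
      exact Set.Infinite.ncard this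
    omega

lemma lower2 (hk : 0 ≤ k) (hk1 : k ≠ 1) (α : ℤ → ℤ) (a b l : ℤ) :
    sPerm α a b ≤ sPerm α a l + sPerm (sigmak k m) l b := by
  by_cases hfin : {n : ℤ | l ≤ n ∧ α n < a}.Finite
  · have hsub : {n : ℤ | b ≤ n ∧ α n < a} ⊆
        {n : ℤ | l ≤ n ∧ α n < a} ∪ Set.Ico b l := by
      rintro n ⟨h1, h2⟩
      rcases le_or_gt l n with h3 | h3
      · exact Or.inl ⟨h3, h2⟩
      · exact Or.inr ⟨h1, h3⟩
    have h4 : sPerm α a b ≤ ({n : ℤ | l ≤ n ∧ α n < a} ∪ Set.Ico b l).ncard :=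
      Set.ncard_le_ncard hsub (hfin.union (Set.finite_Ico b l))
    have h5 := Set.ncard_union_le {n : ℤ | l ≤ n ∧ α n < a} (Set.Ico b l)
    have h6 : (Set.Ico b l).ncard = (l - b).toNat := by
      rw [← Finset.coe_Ico, Set.ncard_coe_finset, Int.card_Ico]
    have h7 := toNat_le_sPerm_sig (k := k) (m := m) hk hk1 l b
    unfold sPerm at *
    omega
  · have h0 : sPerm α a b = 0 := by
      have := inf_shift hfin b
      unfold sPerm
      exact Set.Infinite.ncard this
    omega


lemma sPerm_step' (α : ℤ → ℤ) (a l : ℤ) (hf : {n : ℤ | l ≤ n ∧ α n < a}.Finite) :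
    sPerm α a (l - 1) = sPerm α a l + (if α (l - 1) < a then 1 else 0) := by
  have h := sPerm_step α a (l - 1) (by rw [show l - 1 + 1 = l from by ring]; exact hf)
  rwa [show l - 1 + 1 = l from by ring] at h

lemma mem2 (hk : 0 ≤ k) (hk1 : k ≠ 1) (α : Equiv.Perm ℤ) (hα : memSk k α)
    (h : α (m + 1) < α m) (a b : ℤ) :
    ∃ l : ℤ, sPerm ⇑α a l + sPerm (sigmak k m) l b = sPerm ⇑α a b := by
  by_cases hfin : {n : ℤ | b ≤ n ∧ α n < a}.Finite
  · by_cases hb : b % k = (m + 1) % k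
    · by_cases ha : α b < a
      · refine ⟨b + 1, ?_⟩
        rw [sPerm_sig_b1b hk hk1 hb]
        have hst := sPerm_step (⇑α) a b (fin_shift hfin (b + 1))
        rw [if_pos ha] at hst
        omega
      · refine ⟨b - 1, ?_⟩
        rw [sPerm_sig_bm1]
        obtain ⟨c, hc1, hc2⟩ := order_shift hk hk1 hα hb
        have ha1 : ¬ α (b - 1) < a := by omega
        have hst := sPerm_step' (⇑α) a b hfin
        rw [if_neg ha1] at hst
        omega
    · refine ⟨b, ?_⟩
      rw [sPerm_sig_bb hk hk1 b, if_neg hb]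
      omega
  · refine ⟨b - 1, ?_⟩
    have h1 : sPerm (⇑α) a (b - 1) = 0 := Set.Infinite.ncard (inf_shift hfin (b - 1))
    have h2 : sPerm (⇑α) a b = 0 := Set.Infinite.ncard hfin
    rw [sPerm_sig_bm1, h1, h2]

lemma mem1 (hk : 0 ≤ k) (hk1 : k ≠ 1) (α : Equiv.Perm ℤ) (hα : memSk k α)
    (h : α m < α (m + 1)) (a b : ℤ) :
    ∃ l : ℤ, sPerm ⇑α a l + sPerm (sigmak k m) l b = sPerm (⇑α ∘ sigmak k m) a b := by
  have hE : sPerm (⇑α ∘ sigmak k m) a b = {n : ℤ | b ≤ n ∧ α (sigmak k m n) < a}.ncard := rfl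
  by_cases hfin : {n : ℤ | b ≤ n ∧ α n < a}.Finite
  · by_cases hb : b % k = (m + 1) % k
    · obtain ⟨c, hc1, hc2⟩ := order_shift hk hk1 hα hb
      have horder : α (b - 1) < α b := by omega
      set S := {n : ℤ | b ≤ n ∧ ⇑α n < a} with hS
      set T := {p : ℤ | ((b ≤ p ∧ p ≠ b) ∨ p = b - 1) ∧ ⇑α p < a} with hT
      have hmm : (b - 1) % k = m % k := by
        have := mod_sub_one hb
        simpa using this
      have him : {n : ℤ | b ≤ n ∧ ⇑α (sigmak k m n) < a} = sigmak k m '' T := by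
        ext n
        simp only [mem_setOf_eq, Set.mem_image, hT]
        constructor
        · rintro ⟨h1, h2⟩
          refine ⟨sigmak k m n, ⟨?_, h2⟩, sig_invol hk hk1 n⟩
          by_cases hnb : n = b
          · subst hnb
            rw [sig_of_m1 hk hk1 hb]
            exact Or.inr rfl
          · left
            have hg := sig_ge (k := k) (m := m) n
            refine ⟨by omega, ?_⟩
            intro he
            rcases sig_cases (k := k) (m := m) n with ⟨_, h4⟩ | ⟨_, h4, h5⟩ | ⟨_, _, h4⟩
            · omega
            · have hn1 : n = b + 1 := by omega
              subst hn1
              exact mod_succ_ne hk hk1 b (h4.trans hb.symm)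
            · omega
        · rintro ⟨p, ⟨hp1, hp2⟩, rfl⟩
          rcases hp1 with ⟨hp3, hp4⟩ | rfl
          · have hg := sig_ge (k := k) (m := m) p
            refine ⟨by omega, ?_⟩
            rw [sig_invol hk hk1 p]
            exact hp2
          · rw [sig_of_m hmm, show b - 1 + 1 = b from by ring]
            refine ⟨le_refl b, ?_⟩
            rw [sig_of_m1 hk hk1 hb]
            simpa using hp2
      have hcard : sPerm (⇑α ∘ sigmak k m) a b = T.ncard := by
        rw [hE, him, Set.ncard_image_of_injective _ (sig_injective hk hk1)]
      have hSval : sPerm ⇑α a b = S.ncard := rfl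
      by_cases ha : α b < a
      · have ha1 : α (b - 1) < a := by omega
        have hTeq : T = insert (b - 1) (S \ {b}) := by
          ext p
          simp only [hT, hS, mem_setOf_eq, Set.mem_insert_iff, Set.mem_diff,
            Set.mem_singleton_iff]
          constructor
          · rintro ⟨hp1 | rfl, hp2⟩
            · exact Or.inr ⟨⟨hp1.1, hp2⟩, hp1.2⟩
            · exact Or.inl rfl
          · rintro (rfl | ⟨⟨hq1, hq2⟩, hq3⟩)
            · exact ⟨Or.inr rfl, ha1⟩
            · exact ⟨Or.inl ⟨hq1, hq3⟩, hq2⟩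
        have hbS : b ∈ S := ⟨le_refl b, ha⟩
        have hT1 : T.ncard = (S \ {b}).ncard + 1 := by
          rw [hTeq, Set.ncard_insert_of_notMem (fun hc => by
            simp only [hS, Set.mem_diff, mem_setOf_eq] at hc
            omega) hfin.diff]
        have hS1 : (S \ {b}).ncard + 1 = S.ncard :=
          Set.ncard_diff_singleton_add_one hbS hfin
        refine ⟨b + 1, ?_⟩
        rw [sPerm_sig_b1b hk hk1 hb, hcard]
        have hst := sPerm_step (⇑α) a b (fin_shift hfin (b + 1))
        rw [if_pos ha] at hst
        omega
      · by_cases ha1 : α (b - 1) < a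
        · have hTeq : T = insert (b - 1) S := by
            ext p
            simp only [hT, hS, mem_setOf_eq, Set.mem_insert_iff]
            constructor
            · rintro ⟨hp1 | rfl, hp2⟩
              · exact Or.inr ⟨hp1.1, hp2⟩
              · exact Or.inl rfl
            · rintro (rfl | ⟨hq1, hq2⟩)
              · exact ⟨Or.inr rfl, ha1⟩
              · exact ⟨Or.inl ⟨hq1, fun e => ha (e ▸ hq2)⟩, hq2⟩
          refine ⟨b, ?_⟩
          rw [sPerm_sig_bb hk hk1 b, if_pos hb, hcard, hTeq,
            Set.ncard_insert_of_notMem (fun hc => by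
              simp only [hS, mem_setOf_eq] at hc
              omega) hfin]
          omega
        · have hTeq : T = S := by
            ext p
            simp only [hT, hS, mem_setOf_eq]
            constructor
            · rintro ⟨hp1 | rfl, hp2⟩
              · exact ⟨hp1.1, hp2⟩
              · exact absurd hp2 ha1
            · rintro ⟨hq1, hq2⟩
              exact ⟨Or.inl ⟨hq1, fun e => ha (e ▸ hq2)⟩, hq2⟩
          refine ⟨b - 1, ?_⟩
          rw [sPerm_sig_bm1, hcard, hTeq]
          have hst := sPerm_step' (⇑α) a b hfin
          rw [if_neg ha1] at hst
          omega
    · refine ⟨b, ?_⟩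
      rw [sPerm_sig_bb hk hk1 b, if_neg hb]
      have hclose : ∀ n : ℤ, b ≤ n → b ≤ sigmak k m n := by
        intro n h1
        rcases sig_cases (k := k) (m := m) n with ⟨_, h2⟩ | ⟨_, h2, h3⟩ | ⟨_, _, h2⟩
        · omega
        · have : n ≠ b := fun e => hb (by rw [← e]; exact h2)
          omega
        · omega
      have him : {n : ℤ | b ≤ n ∧ ⇑α (sigmak k m n) < a}
          = sigmak k m '' {n : ℤ | b ≤ n ∧ ⇑α n < a} := by
        ext n
        simp only [mem_setOf_eq, Set.mem_image]
        constructor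
        · rintro ⟨h1, h2⟩
          exact ⟨sigmak k m n, ⟨hclose n h1, h2⟩, sig_invol hk hk1 n⟩
        · rintro ⟨p, ⟨h1, h2⟩, rfl⟩
          refine ⟨hclose p h1, ?_⟩
          rw [sig_invol hk hk1 p]
          exact h2
      rw [hE, him, Set.ncard_image_of_injective _ (sig_injective hk hk1)]
      have : sPerm (⇑α) a b = {n : ℤ | b ≤ n ∧ ⇑α n < a}.ncard := rfl
      omega
  · refine ⟨b - 1, ?_⟩
    have h1 : sPerm (⇑α) a (b - 1) = 0 := Set.Infinite.ncard (inf_shift hfin (b - 1))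
    have h2 : sPerm (⇑α ∘ sigmak k m) a b = 0 :=
      Set.Infinite.ncard (comp_infinite (k := k) (m := m) hk hk1 hfin)
    rw [sPerm_sig_bm1, h1, h2]

end Stmt9

theorem stmt_9 (k : ℤ) (hk : 0 ≤ k) (hk1 : k ≠ 1) (α : Equiv.Perm ℤ)
    (hα : memSk k α) (m : ℤ) :
    (α m < α (m + 1) →
      ∀ a b : ℤ,
        IsLeast (Set.range fun l : ℤ => sPerm ⇑α a l + sPerm (sigmak k m) l b)
          (sPerm (⇑α ∘ sigmak k m) a b)) ∧
    (α (m + 1) < α m →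
      ∀ a b : ℤ,
        IsLeast (Set.range fun l : ℤ => sPerm ⇑α a l + sPerm (sigmak k m) l b)
          (sPerm ⇑α a b)) := by
  constructor
  · intro h a b
    constructor
    · obtain ⟨l, hl⟩ := Stmt9.mem1 hk hk1 α hα h a b
      exact ⟨l, hl⟩
    · rintro x ⟨l, rfl⟩
      exact Stmt9.lower1 hk hk1 ⇑α a b l
  · intro h a b
    constructor
    · obtain ⟨l, hl⟩ := Stmt9.mem2 hk hk1 α hα h a b
      exact ⟨l, hl⟩
    · rintro x ⟨l, rfl⟩
      exact Stmt9.lower2 hk hk1 ⇑α a b l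
end

section
/- Let τ be a bijection of ℤ with finitely many inversions, let g, d ∈ ℤ, and suppose #{n < 0 : τ(n) > 0} = g − d + r where r + 1 = #{n ≥ 0 : τ(n) ≤ 0}. Write {n ≥ 0 : τ(n) ≤ 0} = {b₀ < b₁ < ⋯ < b_r} and {n ≥ 0 : τ⁻¹(−n) ≥ 0} = {a₀ < a₁ < ⋯ < a_r}. Then the total number of inversions of τ satisfies inv(τ) ≥ (r+1)(g−d+r) + Σᵢ(aᵢ−i) + Σᵢ(bᵢ−i). -/
lemma aux_count (P : ℤ → Prop) [DecidablePred P] (r : ℕ) (c : Fin (r + 1) → ℤ)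
    (hc : StrictMono c) (hcr : Set.range c = {n : ℤ | 0 ≤ n ∧ P n})
    (hU : ({p : ℤ × ℤ | 0 ≤ p.1 ∧ ¬ P p.1 ∧ p.1 < p.2 ∧ P p.2}).Finite) :
    (({p : ℤ × ℤ | 0 ≤ p.1 ∧ ¬ P p.1 ∧ p.1 < p.2 ∧ P p.2}).ncard : ℤ)
      = ∑ i : Fin (r + 1), (c i - ((i : ℕ) : ℤ)) := by
  have hcmem : ∀ i, 0 ≤ c i ∧ P (c i) := fun i => by
    have h : c i ∈ Set.range c := ⟨i, rfl⟩
    rwa [hcr] at h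
  set G : Fin (r + 1) → Finset (ℤ × ℤ) :=
    fun i => ((Finset.Ico 0 (c i)).filter fun k => ¬ P k) ×ˢ {c i} with hGdef
  have key : hU.toFinset = Finset.univ.biUnion G := by
    ext p
    simp only [Set.Finite.mem_toFinset, Set.mem_setOf_eq, Finset.mem_biUnion, Finset.mem_univ,
      true_and, hGdef, Finset.mem_product, Finset.mem_filter, Finset.mem_Ico,
      Finset.mem_singleton]
    constructor
    · rintro ⟨h1, h2, h3, h4⟩
      have hp2 : p.2 ∈ Set.range c := by
        rw [hcr]; exact ⟨le_of_lt (lt_of_le_of_lt h1 h3), h4⟩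
      obtain ⟨i, hi⟩ := hp2
      refine ⟨i, ⟨⟨h1, ?_⟩, h2⟩, hi.symm⟩
      rw [hi]; exact h3
    · rintro ⟨i, ⟨⟨h1, h2⟩, h3⟩, h4⟩
      refine ⟨h1, h3, ?_, ?_⟩
      · rw [h4]; exact h2
      · rw [h4]; exact (hcmem i).2
  have hdisj : ∀ i ∈ (Finset.univ : Finset (Fin (r+1))), ∀ j ∈ Finset.univ, i ≠ j →
      Disjoint (G i) (G j) := by
    intro i _ j _ hij
    refine Finset.disjoint_left.mpr fun p hpi hpj => ?_
    simp only [hGdef, Finset.mem_product, Finset.mem_singleton] at hpi hpj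
    exact hij (hc.injective (hpi.2.symm.trans hpj.2))
  have hcard : ∀ i : Fin (r + 1), (((G i).card : ℤ)) = c i - ((i : ℕ) : ℤ) := by
    intro i
    have hPcard : ((Finset.Ico (0:ℤ) (c i)).filter P).card = (i : ℕ) := by
      have himg : (Finset.Ico (0:ℤ) (c i)).filter P = (Finset.Iio i).image c := by
        ext k
        simp only [Finset.mem_filter, Finset.mem_Ico, Finset.mem_image, Finset.mem_Iio]
        constructor
        · rintro ⟨⟨h0, hlt⟩, hPk⟩
          have hk : k ∈ Set.range c := by rw [hcr]; exact ⟨h0, hPk⟩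
          obtain ⟨j, hj⟩ := hk
          refine ⟨j, ?_, hj⟩
          exact hc.lt_iff_lt.mp (by rw [hj]; exact hlt)
        · rintro ⟨j, hji, hj⟩
          subst hj
          exact ⟨⟨(hcmem j).1, hc hji⟩, (hcmem j).2⟩
      rw [himg, Finset.card_image_of_injective _ hc.injective]
      simp
    have hsplit : ((Finset.Ico (0:ℤ) (c i)).filter P).card +
        ((Finset.Ico (0:ℤ) (c i)).filter fun k => ¬ P k).card
        = (Finset.Ico (0:ℤ) (c i)).card :=
      Finset.card_filter_add_card_filter_not (fun k => P k)
    have hIco : ((Finset.Ico (0:ℤ) (c i)).card : ℤ) = c i := by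
      rw [Int.card_Ico]
      simpa using Int.toNat_of_nonneg (by simpa using (hcmem i).1)
    have hGi : (G i).card = ((Finset.Ico (0:ℤ) (c i)).filter fun k => ¬ P k).card := by
      simp [hGdef]
    rw [hPcard] at hsplit
    rw [hGi]
    have hZ : ((i:ℕ) : ℤ) + (((Finset.Ico (0:ℤ) (c i)).filter fun k => ¬ P k).card : ℤ)
        = ((Finset.Ico (0:ℤ) (c i)).card : ℤ) := by exact_mod_cast congrArg Nat.cast hsplit
    linarith [hZ, hIco]
  rw [Set.ncard_eq_toFinset_card _ hU, key, Finset.card_biUnion hdisj]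
  push_cast
  exact Finset.sum_congr rfl (fun i _ => hcard i)

theorem stmt_12 (τ : Equiv.Perm ℤ) (hfin : (invSet ⇑τ).Finite)
    (g d : ℤ) (r : ℕ)
    (a b : Fin (r + 1) → ℤ) (ha : StrictMono a) (hb : StrictMono b)
    (haset : Set.range a = {n : ℤ | 0 ≤ n ∧ 0 ≤ τ.symm (-n)})
    (hbset : Set.range b = {n : ℤ | 0 ≤ n ∧ τ n ≤ 0})
    (hS : (({n : ℤ | n < 0 ∧ 0 < τ n}).ncard : ℤ) = g - d + r) :
    ((r : ℤ) + 1) * (g - d + r) +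
      (∑ i : Fin (r + 1), (a i - ((i : ℕ) : ℤ))) +
      (∑ i : Fin (r + 1), (b i - ((i : ℕ) : ℤ))) ≤
    ((invSet ⇑τ).ncard : ℤ) := by
  classical
  have hbmem : ∀ i, 0 ≤ b i ∧ τ (b i) ≤ 0 := fun i => by
    have h : b i ∈ Set.range b := ⟨i, rfl⟩; rwa [hbset] at h
  set N : Set ℤ := {n : ℤ | n < 0 ∧ 0 < τ n} with hN
  set T1 : Set (ℤ × ℤ) := {p : ℤ × ℤ | p.1 < 0 ∧ 0 < τ p.1 ∧ 0 ≤ p.2 ∧ τ p.2 ≤ 0} with hT1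
  set T2 : Set (ℤ × ℤ) := {p : ℤ × ℤ | 0 ≤ p.1 ∧ ¬ τ p.1 ≤ 0 ∧ p.1 < p.2 ∧ τ p.2 ≤ 0} with hT2
  set T3 : Set (ℤ × ℤ) := {p : ℤ × ℤ | p.1 < 0 ∧ τ p.1 ≤ 0 ∧ 0 ≤ p.2 ∧ τ p.2 < τ p.1} with hT3
  have hT1sub : T1 ⊆ invSet ⇑τ := fun p hp =>
    ⟨lt_of_lt_of_le hp.1 hp.2.2.1, lt_of_le_of_lt hp.2.2.2 hp.2.1⟩
  have hT2sub : T2 ⊆ invSet ⇑τ := fun p hp =>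
    ⟨hp.2.2.1, lt_of_le_of_lt hp.2.2.2 (lt_of_not_ge hp.2.1)⟩
  have hT3sub : T3 ⊆ invSet ⇑τ := fun p hp =>
    ⟨lt_of_lt_of_le hp.1 hp.2.2.1, hp.2.2.2⟩
  have hT1f : T1.Finite := hfin.subset hT1sub
  have hT2f : T2.Finite := hfin.subset hT2sub
  have hT3f : T3.Finite := hfin.subset hT3sub
  -- N is finite
  have hNfin : N.Finite := by
    have himg : (fun n => (n, b 0)) '' N ⊆ invSet ⇑τ := by
      rintro _ ⟨n, hn, rfl⟩
      exact ⟨lt_of_lt_of_le hn.1 (hbmem 0).1, lt_of_le_of_lt (hbmem 0).2 hn.2⟩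
    exact Set.Finite.of_finite_image (hfin.subset himg)
      (Function.Injective.injOn fun x y h => (Prod.ext_iff.mp h).1)
  -- T1 cardinality
  have hT1eq : T1 = N ×ˢ Set.range b := by
    ext p
    simp only [hT1, Set.mem_setOf_eq, Set.mem_prod, hN, hbset]
    tauto
  have hrange : (Set.range b).ncard = r + 1 := by
    rw [← Nat.card_coe_set_eq, Nat.card_range_of_injective hb.injective]
    simp
  have hT1card : (T1.ncard : ℤ) = ((r : ℤ) + 1) * (g - d + r) := by
    have hprod : T1.ncard = N.ncard * (Set.range b).ncard := by
      rw [hT1eq, ← Nat.card_coe_set_eq, Nat.card_congr (Equiv.Set.prod _ _), Nat.card_prod,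
        Nat.card_coe_set_eq, Nat.card_coe_set_eq]
    rw [hprod, hrange]
    push_cast
    rw [hS]
    ring
  -- T2 cardinality
  have hT2card : (T2.ncard : ℤ) = ∑ i : Fin (r + 1), (b i - ((i : ℕ) : ℤ)) := by
    rw [hT2]
    exact aux_count (fun n => τ n ≤ 0) r b hb hbset (by rw [← hT2]; exact hT2f)
  -- T3 cardinality via the value side
  have hT3card : (T3.ncard : ℤ) = ∑ i : Fin (r + 1), (a i - ((i : ℕ) : ℤ)) := by
    set f : ℤ × ℤ → ℤ × ℤ := fun q => (τ.symm (-q.1), τ.symm (-q.2)) with hf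
    have finj : Function.Injective f := by
      intro x y h
      simp only [hf, Prod.mk.injEq] at h
      have h1 := τ.symm.injective h.1
      have h2 := τ.symm.injective h.2
      exact Prod.ext (by linarith [neg_injective h1]) (by linarith [neg_injective h2])
    set T3' : Set (ℤ × ℤ) :=
      {p : ℤ × ℤ | 0 ≤ p.1 ∧ ¬ 0 ≤ τ.symm (-p.1) ∧ p.1 < p.2 ∧ 0 ≤ τ.symm (-p.2)} with hT3'
    have hT3eq : T3 = f '' T3' := by
      ext p
      constructor
      · intro hp
        refine ⟨(-τ p.1, -τ p.2), ⟨?_, ?_, ?_, ?_⟩, ?_⟩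
        · simpa using hp.2.1
        · simpa using not_le.mpr hp.1
        · simpa using hp.2.2.2
        · simpa using hp.2.2.1
        · simp [hf]
      · rintro ⟨q, hq, rfl⟩
        refine ⟨not_le.mp hq.2.1, ?_, hq.2.2.2, ?_⟩
        · simpa [hf] using neg_nonpos_of_nonneg hq.1
        · simp only [hf, Equiv.apply_symm_apply]
          exact neg_lt_neg hq.2.2.1
    have hT3'fin : T3'.Finite := by
      apply Set.Finite.of_finite_image _ finj.injOn
      rw [← hT3eq]; exact hT3f
    rw [hT3eq, Set.ncard_image_of_injective _ finj]
    exact aux_count (fun n => 0 ≤ τ.symm (-n)) r a ha haset hT3'fin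
  -- disjointness
  have hd12 : Disjoint T1 T2 :=
    Set.disjoint_left.mpr fun p h1 h2 => absurd h2.1 (not_le.mpr h1.1)
  have hd13 : Disjoint T1 T3 :=
    Set.disjoint_left.mpr fun p h1 h3 => absurd h3.2.1 (not_le.mpr h1.2.1)
  have hd23 : Disjoint T2 T3 :=
    Set.disjoint_left.mpr fun p h2 h3 => absurd h2.1 (not_le.mpr h3.1)
  have hcardunion : (T1 ∪ T2 ∪ T3).ncard = T1.ncard + T2.ncard + T3.ncard := by
    rw [Set.ncard_union_eq (Set.disjoint_union_left.mpr ⟨hd13, hd23⟩) (hT1f.union hT2f) hT3f,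
      Set.ncard_union_eq hd12 hT1f hT2f]
  have hle : (T1 ∪ T2 ∪ T3).ncard ≤ (invSet ⇑τ).ncard :=
    Set.ncard_le_ncard (Set.union_subset (Set.union_subset hT1sub hT2sub) hT3sub) hfin
  rw [hcardunion] at hle
  have hcast : (T1.ncard : ℤ) + T2.ncard + T3.ncard ≤ ((invSet ⇑τ).ncard : ℤ) := by
    exact_mod_cast hle
  linarith [hT1card, hT2card, hT3card, hcast]
end

section
/- Let k ≥ 2 and let τ be a bijection of ℤ with τ(n+k) = τ(n) + k for all n. Define x_m = #{n : 0 ≤ n < k and τ(n) ≤ mk} for m ∈ ℤ. Then the sequence x_m − x_{m−1} is nondecreasing in m, takes values in {0,…,k}, equals 0 for m ≪ 0 and k for m ≫ 0. -/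
theorem stmt_13 (k : ℤ) (hk : 2 ≤ k) (τ : Equiv.Perm ℤ)
    (hτ : ∀ n : ℤ, τ (n + k) = τ n + k)
    (xdiff : ℤ → ℕ)
    (hx : ∀ m : ℤ, xdiff m = ({n : ℤ | 0 ≤ n ∧ n < k ∧ τ n ≤ m * k}).ncard) :
    Monotone xdiff ∧
    (∀ m : ℤ, (xdiff m : ℤ) ≤ k) ∧
    (∃ M : ℤ, ∀ m : ℤ, m ≤ M → xdiff m = 0) ∧
    (∃ N : ℤ, ∀ m : ℤ, N ≤ m → (xdiff m : ℤ) = k) := by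
  have hk0 : (0:ℤ) < k := by omega
  have key : ∀ m : ℤ, xdiff m =
      ((Finset.Ico (0:ℤ) k).filter (fun n => τ n ≤ m * k)).card := by
    intro m
    rw [hx m]
    have : {n : ℤ | 0 ≤ n ∧ n < k ∧ τ n ≤ m * k} =
        (((Finset.Ico (0:ℤ) k).filter (fun n => τ n ≤ m * k)) : Set ℤ) := by
      ext n
      simp [Finset.mem_Ico, and_assoc]
    rw [this, Set.ncard_coe_finset]
  have hmono : Monotone xdiff := by
    intro a b hab
    rw [key a, key b]
    apply Finset.card_le_card
    intro n hn
    simp only [Finset.mem_filter] at hn ⊢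
    exact ⟨hn.1, hn.2.trans (by nlinarith)⟩
  have hne : (Finset.Ico (0:ℤ) k).Nonempty := by
    rw [Finset.nonempty_Ico]; omega
  refine ⟨hmono, ?_, ?_, ?_⟩
  · intro m
    rw [key m]
    have h1 : ((Finset.Ico (0:ℤ) k).filter (fun n => τ n ≤ m * k)).card ≤
        (Finset.Ico (0:ℤ) k).card := Finset.card_filter_le _ _
    have h2 : (Finset.Ico (0:ℤ) k).card = k.toNat := by simp
    have := h1.trans h2.le
    omega
  · set c := ((Finset.Ico (0:ℤ) k).image τ).min' (hne.image τ) with hc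
    refine ⟨-(|c| + 1), fun m hm => ?_⟩
    rw [key m]
    rw [Finset.card_eq_zero, Finset.filter_eq_empty_iff]
    intro n hn
    have hcn : c ≤ τ n := Finset.min'_le _ _ (Finset.mem_image_of_mem τ hn)
    have hmk : m * k ≤ m := by nlinarith [abs_nonneg c]
    have : m * k < c := by
      have : m ≤ -(|c|+1) := hm
      have := neg_abs_le c
      omega
    omega
  · set d := ((Finset.Ico (0:ℤ) k).image τ).max' (hne.image τ) with hd
    refine ⟨|d|, fun m hm => ?_⟩
    rw [key m]
    have hall : (Finset.Ico (0:ℤ) k).filter (fun n => τ n ≤ m * k) =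
        Finset.Ico (0:ℤ) k := by
      apply Finset.filter_true_of_mem
      intro n hn
      have hdn : τ n ≤ d := Finset.le_max' _ _ (Finset.mem_image_of_mem τ hn)
      have hm0 : 0 ≤ m := (abs_nonneg d).trans hm
      have : m ≤ m * k := by nlinarith
      have := le_abs_self d
      omega
    rw [hall]
    simp [hk0.le]
end

section
/- Let k ≥ 2 and τ ∈ S̃_k. Let μ₁ ≤ ⋯ ≤ μ_k be the nondecreasing integer k-tuple determined by x_m − x_{m−1} = #{i : μᵢ ≥ −m} for all m, where x_m = #{n : 0 ≤ n < k, τ(n) ≤ mk}. Then inv_k(τ) ≥ |μ| := Σ_{i<j} max{0, μⱼ − μᵢ − 1}. -/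
lemma max0_toNat (z : ℤ) : max 0 z = ((z.toNat : ℤ)) := by
  rw [Int.toNat_eq_max, max_comm]

lemma abskey (a b : ℤ) : max 0 (|a - b| - 1) = max 0 (a - b - 1) + max 0 (b - a - 1) := by
  rcases le_total a b with h | h
  · rw [abs_of_nonpos (by omega)]; simp only [max0_toNat]; omega
  · rw [abs_of_nonneg (by omega)]; simp only [max0_toNat]; omega

lemma countP_split (s : Multiset ℤ) (x : ℤ) :
    s.countP (· ≤ x) = s.countP (· ≤ x - 1) + s.count x := by
  induction s using Multiset.induction with
  | empty => simp
  | cons a s ih =>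
      simp only [Multiset.countP_cons, Multiset.count_cons, ih]
      split_ifs <;> omega

lemma multiset_eq_of_countP (s t : Multiset ℤ)
    (h : ∀ m : ℤ, s.countP (· ≤ m) = t.countP (· ≤ m)) : s = t := by
  ext x
  have := countP_split s x
  have := countP_split t x
  have := h x
  have := h (x - 1)
  omega

noncomputable def Tm (s : Multiset ℤ) : ℤ :=
  (s.bind fun x => s.map fun y => max 0 (|x - y| - 1)).sum

lemma Tm_map {α : Type*} (F : Finset α) (g : α → ℤ) :
    Tm (F.val.map g) = ∑ x ∈ F, ∑ y ∈ F, max 0 (|g x - g y| - 1) := by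
  rw [Tm, Multiset.bind_map, Multiset.sum_bind]
  simp only [Multiset.map_map, Function.comp]
  rw [Finset.sum_eq_multiset_sum]
  congr 1

lemma sum_abs_split {ι : Type*} (F : Finset ι) (g : ι → ℤ) :
    ∑ x ∈ F, ∑ y ∈ F, max 0 (|g x - g y| - 1)
      = 2 * ∑ x ∈ F, ∑ y ∈ F, max 0 (g x - g y - 1) := by
  have h1 : ∑ x ∈ F, ∑ y ∈ F, max 0 (g y - g x - 1)
      = ∑ x ∈ F, ∑ y ∈ F, max 0 (g x - g y - 1) := Finset.sum_comm
  calc ∑ x ∈ F, ∑ y ∈ F, max 0 (|g x - g y| - 1)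
      = ∑ x ∈ F, ∑ y ∈ F, (max 0 (g x - g y - 1) + max 0 (g y - g x - 1)) := by
        simp only [abskey]
    _ = (∑ x ∈ F, ∑ y ∈ F, max 0 (g x - g y - 1))
        + ∑ x ∈ F, ∑ y ∈ F, max 0 (g y - g x - 1) := by
        rw [← Finset.sum_add_distrib]
        exact Finset.sum_congr rfl fun x _ => Finset.sum_add_distrib
    _ = 2 * ∑ x ∈ F, ∑ y ∈ F, max 0 (g x - g y - 1) := by rw [h1]; ring

lemma sum_sq_pairs {ι : Type*} [LinearOrder ι] (F : Finset ι) (g : ι → ℤ) :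
    ∑ x ∈ F, ∑ y ∈ F, max 0 (|g x - g y| - 1)
      = 2 * ∑ p ∈ (F ×ˢ F).filter (fun p => p.1 < p.2), max 0 (|g p.1 - g p.2| - 1) := by
  classical
  rw [← Finset.sum_product']
  rw [← Finset.sum_filter_add_sum_filter_not (F ×ˢ F) (fun p => p.1 < p.2)]
  have h2 : ∑ p ∈ (F ×ˢ F).filter (fun p => ¬ p.1 < p.2), max 0 (|g p.1 - g p.2| - 1)
      = ∑ p ∈ (F ×ˢ F).filter (fun p => p.1 < p.2), max 0 (|g p.1 - g p.2| - 1) := by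
    rw [← Finset.sum_filter_add_sum_filter_not
      ((F ×ˢ F).filter (fun p => ¬ p.1 < p.2)) (fun p => p.2 < p.1)]
    have hz : ∑ p ∈ ((F ×ˢ F).filter (fun p => ¬ p.1 < p.2)).filter
        (fun p => ¬ p.2 < p.1), max 0 (|g p.1 - g p.2| - 1) = 0 := by
      apply Finset.sum_eq_zero
      intro p hp
      simp only [Finset.mem_filter] at hp
      have : p.1 = p.2 := le_antisymm (not_lt.1 hp.2) (not_lt.1 hp.1.2)
      simp [this]
    rw [hz, add_zero]
    apply Finset.sum_nbij' (i := Prod.swap) (j := Prod.swap)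
    · intro p hp
      simp only [Finset.mem_filter, Finset.mem_product] at hp ⊢
      exact ⟨⟨hp.1.1.2, hp.1.1.1⟩, hp.2⟩
    · intro p hp
      simp only [Finset.mem_filter, Finset.mem_product] at hp ⊢
      exact ⟨⟨⟨hp.1.2, hp.1.1⟩, not_lt.2 (le_of_lt hp.2)⟩, hp.2⟩
    · intro p _; exact Prod.swap_swap p
    · intro p _; exact Prod.swap_swap p
    · intro p _
      simp only [Prod.fst_swap, Prod.snd_swap]
      rw [abs_sub_comm]
  rw [h2]; ring

theorem stmt_15 (k : ℕ) (hk : 2 ≤ k) (τ : Equiv.Perm ℤ)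
    (hτ : ∀ n : ℤ, τ (n + k) = τ n + k)
    (μ : Fin k → ℤ) (hμ : Monotone μ)
    (hxd : ∀ m : ℤ,
      ({n : ℤ | 0 ≤ n ∧ n < k ∧ τ n ≤ m * k}).ncard =
        (Finset.univ.filter fun i : Fin k => -m ≤ μ i).card) :
    (∑ p ∈ Finset.univ.filter (fun p : Fin k × Fin k => p.1 < p.2),
        max 0 (μ p.2 - μ p.1 - 1)) ≤
      (invk (k : ℤ) ⇑τ : ℤ) := by
  classical
  set k' : ℤ := (k : ℤ) with hk'def
  have hk0 : (0:ℤ) < k' := by omega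
  -- translation lemma
  have htk : ∀ (n s : ℤ), τ (n + s * k') = τ n + s * k' := by
    intro n s
    induction s using Int.induction_on with
    | zero => simp
    | succ i ih =>
        have h1 : n + ((i : ℤ) + 1) * k' = (n + (i : ℤ) * k') + k' := by ring
        rw [h1, hτ, ih]; ring
    | pred i ih =>
        have h2 := hτ (n + (-(i : ℤ) - 1) * k')
        have h3 : (n + (-(i : ℤ) - 1) * k') + k' = n + (-(i : ℤ)) * k' := by ring
        rw [h3, ih] at h2
        have h4 : (-(i:ℤ) - 1) * k' = -(i:ℤ) * k' - k' := by ring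
        linarith [h2, h4]
  -- the "ceiling" function
  set a : ℤ → ℤ := fun n => -(-(τ n) / k') with ha_def
  have ha : ∀ n m : ℤ, a n ≤ m ↔ τ n ≤ m * k' := by
    intro n m
    rw [ha_def]
    simp only
    rw [neg_le, Int.le_ediv_iff_mul_le hk0, neg_mul, neg_le_neg_iff]
  have haub : ∀ n : ℤ, τ n ≤ a n * k' := fun n => (ha n (a n)).1 le_rfl
  have halb : ∀ n : ℤ, (a n - 1) * k' < τ n := by
    intro n
    by_contra h
    push_neg at h
    have := (ha n (a n - 1)).2 h
    omega
  -- Step A : equality of multisets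
  have hcount : ∀ m : ℤ, ((Finset.Ico (0:ℤ) k').filter fun n => a n ≤ m).card
      = (Finset.univ.filter fun i : Fin k => -(μ i) ≤ m).card := by
    intro m
    have h1 := hxd m
    have hset : {n : ℤ | 0 ≤ n ∧ n < k ∧ τ n ≤ m * k}
        = ↑((Finset.Ico (0:ℤ) k').filter fun n => a n ≤ m) := by
      ext n
      simp only [Set.mem_setOf_eq, Finset.coe_filter, Finset.mem_Ico, Set.mem_setOf_eq, ha]
      tauto
    rw [hset, Set.ncard_coe_finset] at h1
    rw [h1]
    congr 1
    ext i
    simp [neg_le]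
  have hmult : (Finset.Ico (0:ℤ) k').val.map a
      = Finset.univ.val.map (fun i : Fin k => -(μ i)) := by
    apply multiset_eq_of_countP
    intro m
    have h := hcount m
    have e1 : ((Finset.Ico (0:ℤ) k').val.map a).countP (· ≤ m)
        = ((Finset.Ico (0:ℤ) k').filter fun n => a n ≤ m).card := by
      rw [Multiset.countP_map]
      rfl
    have e2 : (Finset.univ.val.map (fun i : Fin k => -(μ i))).countP (· ≤ m)
        = (Finset.univ.filter fun i : Fin k => -(μ i) ≤ m).card := by
      rw [Multiset.countP_map]
      rfl
    rw [e1, e2, h]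
  -- the two double sums are equal
  have hTT : ∑ x ∈ Finset.Ico (0:ℤ) k', ∑ y ∈ Finset.Ico (0:ℤ) k',
        max 0 (|a x - a y| - 1)
      = ∑ x : Fin k, ∑ y : Fin k, max 0 (|μ x - μ y| - 1) := by
    have := congrArg Tm hmult
    rw [Tm_map, Tm_map] at this
    rw [this]
    apply Finset.sum_congr rfl
    intro x _
    apply Finset.sum_congr rfl
    intro y _
    congr 1
    rw [show -μ x - -μ y = -(μ x - μ y) by ring, abs_neg]
  -- LHS of the goal equals half the μ-double-sum
  have hgoalL : ∑ x : Fin k, ∑ y : Fin k, max 0 (|μ x - μ y| - 1)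
      = 2 * ∑ p ∈ Finset.univ.filter (fun p : Fin k × Fin k => p.1 < p.2),
          max 0 (μ p.2 - μ p.1 - 1) := by
    rw [sum_sq_pairs]
    rw [Finset.univ_product_univ]
    congr 1
    apply Finset.sum_congr rfl
    intro p hp
    simp only [Finset.mem_filter] at hp
    have hle : μ p.1 ≤ μ p.2 := hμ (le_of_lt hp.2)
    rw [abs_sub_comm, abs_of_nonneg (by omega)]
  -- N : the count on the a-side
  set N : ℤ := ∑ x ∈ Finset.Ico (0:ℤ) k', ∑ y ∈ Finset.Ico (0:ℤ) k',
      max 0 (a x - a y - 1) with hN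
  have hgoalN : ∑ p ∈ Finset.univ.filter (fun p : Fin k × Fin k => p.1 < p.2),
      max 0 (μ p.2 - μ p.1 - 1) = N := by
    have h2 := sum_abs_split (Finset.Ico (0:ℤ) k') a
    rw [hTT, hgoalL] at h2
    have := mul_left_cancel₀ (two_ne_zero (α := ℤ)) h2
    omega
  rw [hgoalN]
  -- Step C : injection into the inversion set
  set S : Set (ℤ × ℤ) := {p ∈ invSet ⇑τ | 0 ≤ p.2 ∧ p.2 < k'} with hS
  have hinvk : invk (k : ℤ) ⇑τ = S.ncard := by
    rw [invk, if_neg (by omega)]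
  -- the domain finset
  set E : Finset ((_ : ℤ × ℤ) × ℤ) :=
    (Finset.Ico (0:ℤ) k' ×ˢ Finset.Ico (0:ℤ) k').sigma
      (fun p => Finset.Ico 1 (a p.1 - a p.2)) with hE
  have hEcard : (E.card : ℤ) = N := by
    rw [hE, Finset.card_sigma]
    push_cast
    rw [Finset.sum_product]
    apply Finset.sum_congr rfl
    intro x _
    apply Finset.sum_congr rfl
    intro y _
    rw [Int.card_Ico, max0_toNat]
  set Φ : (_ : ℤ × ℤ) × ℤ → ℤ × ℤ := fun x => (x.1.1 - x.2 * k', x.1.2) with hΦ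
  have hmemE : ∀ x ∈ E, 0 ≤ x.1.1 ∧ x.1.1 < k' ∧ 0 ≤ x.1.2 ∧ x.1.2 < k'
      ∧ 1 ≤ x.2 ∧ x.2 < a x.1.1 - a x.1.2 := by
    intro x hx
    rw [hE] at hx
    simp only [Finset.mem_sigma, Finset.mem_product, Finset.mem_Ico] at hx
    exact ⟨hx.1.1.1, hx.1.1.2, hx.1.2.1, hx.1.2.2, hx.2.1, hx.2.2⟩
  have hsub : ↑(E.image Φ) ⊆ S := by
    intro p hp
    simp only [Finset.coe_image, Set.mem_image, Finset.mem_coe] at hp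
    obtain ⟨x, hx, rfl⟩ := hp
    obtain ⟨h1, h2, h3, h4, h5, h6⟩ := hmemE x hx
    have hτx : τ (x.1.1 - x.2 * k') = τ x.1.1 - x.2 * k' := by
      have := htk x.1.1 (-x.2)
      rw [show x.1.1 + -x.2 * k' = x.1.1 - x.2 * k' by ring] at this
      rw [this]; ring
    constructor
    · constructor
      · -- x.1.1 - x.2 * k' < x.1.2
        have : x.2 * k' ≥ k' := le_mul_of_one_le_left (le_of_lt hk0) h5
        simp only [hΦ]
        omega
      · -- τ x.1.2 < τ (x.1.1 - x.2*k')
        simp only [hΦ]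
        rw [hτx]
        have hA := halb x.1.1
        have hB := haub x.1.2
        have hstep : (a x.1.2) * k' ≤ (a x.1.1 - 1 - x.2) * k' :=
          mul_le_mul_of_nonneg_right (by omega) (le_of_lt hk0)
        nlinarith
    · exact ⟨h3, h4⟩
  have hinj : Set.InjOn Φ ↑E := by
    intro x hx y hy hxy
    obtain ⟨hx1, hx2, hx3, hx4, hx5, hx6⟩ := hmemE x (by exact_mod_cast hx)
    obtain ⟨hy1, hy2, hy3, hy4, hy5, hy6⟩ := hmemE y (by exact_mod_cast hy)
    simp only [hΦ, Prod.mk.injEq] at hxy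
    obtain ⟨hq, hsnd⟩ := hxy
    have hdvd : k' ∣ (x.1.1 - y.1.1) := ⟨x.2 - y.2, by linarith [hq]⟩
    have hz : x.1.1 - y.1.1 = 0 := by
      apply Int.eq_zero_of_abs_lt_dvd hdvd
      rw [abs_lt]
      omega
    have hfst : x.1.1 = y.1.1 := by omega
    have ht : x.2 = y.2 := by
      have : x.2 * k' = y.2 * k' := by omega
      exact mul_right_cancel₀ (ne_of_gt hk0) this
    obtain ⟨⟨xa, xb⟩, xt⟩ := x
    obtain ⟨⟨ya, yb⟩, yt⟩ := y
    simp only at hfst hsnd ht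
    subst hfst; subst hsnd; subst ht
    rfl
  -- finiteness of S
  have hne : (0:ℤ) ∈ Finset.Ico (0:ℤ) k' := by simp [hk0]
  set F : Finset ℤ := (Finset.Ico (0:ℤ) k').image (⇑τ) with hF
  have hFne : F.Nonempty := ⟨τ 0, Finset.mem_image_of_mem _ hne⟩
  set c : ℤ := F.min' hFne with hc
  set M : ℤ := F.max' hFne with hM
  have hfin : S.Finite := by
    apply Set.Finite.subset
      ((Finset.Ico (c - M) k' ×ˢ Finset.Ico (0:ℤ) k').finite_toSet)
    intro p hp
    obtain ⟨⟨huv, hτvu⟩, hv0, hvk⟩ := hp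
    simp only [Finset.coe_product, Set.mem_prod, Finset.mem_coe, Finset.mem_Ico]
    have hrm : p.1 % k' + (p.1 / k') * k' = p.1 := by
      have := Int.emod_add_mul_ediv p.1 k'
      linarith [this]
    have hτu : τ p.1 = τ (p.1 % k') + (p.1 / k') * k' := by
      have := htk (p.1 % k') (p.1 / k')
      rw [hrm] at this
      exact this
    have hmem : τ (p.1 % k') ∈ F :=
      Finset.mem_image_of_mem _ (by
        simp only [Finset.mem_Ico]
        exact ⟨Int.emod_nonneg _ (ne_of_gt hk0), Int.emod_lt_of_pos _ hk0⟩)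
    have hub : τ (p.1 % k') ≤ M := Finset.le_max' F _ hmem
    have hmem2 : τ p.2 ∈ F :=
      Finset.mem_image_of_mem _ (by simp only [Finset.mem_Ico]; exact ⟨hv0, hvk⟩)
    have hlb : c ≤ τ p.2 := Finset.min'_le F _ hmem2
    have hpm : 0 ≤ p.1 % k' := Int.emod_nonneg _ (ne_of_gt hk0)
    constructor
    · constructor
      · -- c - M ≤ p.1
        omega
      · omega
    · exact ⟨hv0, hvk⟩
  -- conclude
  calc N = (E.card : ℤ) := hEcard.symm
    _ = ((E.image Φ).card : ℤ) := by rw [Finset.card_image_of_injOn hinj]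
    _ = ((↑(E.image Φ) : Set (ℤ × ℤ)).ncard : ℤ) := by rw [Set.ncard_coe_finset]
    _ ≤ (S.ncard : ℤ) := by
        exact_mod_cast Set.ncard_le_ncard hsub hfin
    _ = (invk (k : ℤ) ⇑τ : ℤ) := by rw [hinvk]
end
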